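/- arXiv:1311.7221 — 5 statements merged into one kernel-verified Lean document; each statement's English description precedes it below -/
import Mathlib

section
/- Let G = (V,E) be a k-sparse locally finite graph and q : V → [0,∞). Then for every ε with 0 < ε ≤ 1 and every finitely supported f : V → ℂ one has (1−ε)(Q_deg(f) + Q_q(f)) − (k/2)(1/ε − ε)·‖f‖² ≤ Q_Δ(f) + Q_q(f) ≤ (1+ε)(Q_deg(f) + Q_q(f)) + (k/2)(1/ε − ε)·‖f‖². -/
open scoped BigOperators

noncomputable section

variable {V : Type*} [DecidableEq V] (G : SimpleGraph V) [DecidableRel G.Adj]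

/-- The squared `ℓ²`-norm `‖f‖² = ∑_x |f x|²` of a (finitely supported) function. -/
def qNormSq (f : V → ℂ) : ℝ := ∑' x, ‖f x‖ ^ 2

/-- The quadratic form of the Laplacian:
`Q_Δ(f) = (1/2) ∑_{x ~ y} |f x - f y|²` (sum over ordered pairs of adjacent vertices). -/
def qLap (f : V → ℂ) : ℝ :=
  (1 / 2) * ∑' (x : V), ∑' (y : V), if G.Adj x y then ‖f x - f y‖ ^ 2 else 0

/-- The magnetic quadratic form
`Q_θ(f) = (1/2) ∑_{x ~ y} |f x - e^{iθ(x,y)} f y|²`. -/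
def qMag (θ : V → V → ℝ) (f : V → ℂ) : ℝ :=
  (1 / 2) * ∑' (x : V), ∑' (y : V),
    if G.Adj x y then ‖f x - Complex.exp (Complex.I * (θ x y)) * f y‖ ^ 2 else 0

/-- The quadratic form of a potential: `Q_q(f) = ∑_x q x * |f x|²`. -/
def qPot (q : V → ℝ) (f : V → ℂ) : ℝ := ∑' x, q x * ‖f x‖ ^ 2

variable [G.LocallyFinite]

/-- The quadratic form of the degree: `Q_deg(f) = ∑_x deg x * |f x|²`. -/
def qDeg (f : V → ℂ) : ℝ := ∑' x, (G.degree x : ℝ) * ‖f x‖ ^ 2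

/-- Twice the number of undirected edges of the subgraph induced on `W`,
i.e. the number of ordered pairs of adjacent vertices in `W × W`. -/
def edgesTwice (W : Finset V) : ℕ := ((W ×ˢ W).filter fun p => G.Adj p.1 p.2).card

/-- The cardinality `|∂W|` of the edge boundary of `W`. -/
def bdryCard (W : Finset V) : ℕ :=
  ∑ x ∈ W, ((G.neighborFinset x).filter fun y => y ∉ W).card

/-- `(G, q)` is `(a,k)`-sparse: `2|E_W| ≤ k|W| + a(|∂W| + q₊(W))` for all finite `W`. -/
def IsSparse (q : V → ℝ) (a k : ℝ) : Prop :=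
  ∀ W : Finset V,
    (edgesTwice G W : ℝ) ≤ k * W.card + a * ((bdryCard G W : ℝ) + ∑ x ∈ W, max (q x) 0)

/-- The potential `q` belongs to the class `K_α`:
`Q_{q₋}(f) ≤ α (Q_Δ(f) + Q_{q₊}(f)) + C ‖f‖²` for all finitely supported `f`. -/
def KClass (q : V → ℝ) (α : ℝ) : Prop :=
  ∃ C : ℝ, 0 ≤ C ∧ ∀ f : V → ℂ, (Function.support f).Finite →
    qPot (fun x => max (-q x) 0) f ≤
      α * (qLap G f + qPot (fun x => max (q x) 0) f) + C * qNormSq f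

/-- The potential `q` belongs to the magnetic class `K_α^θ`:
`Q_{q₋}(f) ≤ α (Q_θ(f) + Q_{q₊}(f)) + C ‖f‖²` for all finitely supported `f`. -/
def KClassTheta (θ : V → V → ℝ) (q : V → ℝ) (α : ℝ) : Prop :=
  ∃ C : ℝ, 0 ≤ C ∧ ∀ f : V → ℂ, (Function.support f).Finite →
    qPot (fun x => max (-q x) 0) f ≤
      α * (qMag G θ f + qPot (fun x => max (q x) 0) f) + C * qNormSq f

/-- The Cheeger (isoperimetric) constant of `U ⊆ V`:
the infimum over nonempty finite `W ⊆ U` of `(|∂W| + q(W)) / (deg(W) + q(W))`,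
with the convention that the quotient is `0` when the denominator vanishes. -/
def cheeger (q : V → ℝ) (U : Set V) : ℝ :=
  ⨅ W : {W : Finset V // ↑W ⊆ U ∧ W.Nonempty},
    if (∑ x ∈ W.1, ((G.degree x : ℝ) + q x)) = 0 then 0
    else ((bdryCard G W.1 : ℝ) + ∑ x ∈ W.1, q x) / ∑ x ∈ W.1, ((G.degree x : ℝ) + q x)

/-- The Cheeger constant at infinity: `α_∞ = sup over finite K of α_{V∖K}`. -/
def cheegerInfty (q : V → ℝ) : ℝ :=
  ⨆ K : Finset V, cheeger G q ((↑K : Set V)ᶜ)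

end

/-!
Expanding `|f x - f y|²` gives `Q_Δ(f) = Q_deg(f) - Re ∑_{x ~ y} f x · conj (f y)`. Weighted AM-GM
bounds each cross term by `ε/2 (|f x|² + |f y|²) + (1/ε - ε)/2 · min (|f x|², |f y|²)`, and a
layer-cake argument turns `k`-sparseness into `∑_{x ~ y} min (g x, g y) ≤ k ∑ g` for `g ≥ 0`.
So `|Q_Δ(f) - Q_deg(f)| ≤ ε Q_deg(f) + k/2 (1/ε - ε) ‖f‖²`, and adding `Q_q(f) ≥ 0` costs
`ε Q_q(f)`.
-/

theorem Complex.sq_norm_sub (a b : ℂ) :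
    ‖a - b‖ ^ 2 = ‖a‖ ^ 2 + ‖b‖ ^ 2 - 2 * (a * starRingEnd ℂ b).re := by
  simp only [Complex.sq_norm, Complex.normSq_sub]

/-- Weighted AM-GM `a b ≤ ε b² / 2 + a² / (2ε)` for `a ≤ b`, written symmetrically in `a, b`. -/
theorem mul_le_half_mul_sq_add_min_sq {ε a b : ℝ} (hε : 0 < ε) (ha : 0 ≤ a) (hb : 0 ≤ b) :
    a * b ≤ ε / 2 * (a ^ 2 + b ^ 2) + (1 / ε - ε) / 2 * min (a ^ 2) (b ^ 2) := by
  wlog hab : a ≤ b generalizing a b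
  · simpa only [mul_comm, add_comm, min_comm] using this hb ha (le_of_not_ge hab)
  rw [min_eq_left (pow_le_pow_left₀ ha hab 2)]
  have key : ε / 2 * (a ^ 2 + b ^ 2) + (1 / ε - ε) / 2 * a ^ 2 - a * b
      = (a - ε * b) ^ 2 / (2 * ε) := by
    field_simp
    ring
  rw [← sub_nonneg, key]
  positivity

section AdjPairs

variable {V : Type*} (G : SimpleGraph V) [DecidableRel G.Adj]

def adjPairs (T : Finset V) : Finset (V × V) := (T ×ˢ T).filter fun p => G.Adj p.1 p.2

variable {G}

theorem edgesTwice_eq_card_adjPairs (T : Finset V) : edgesTwice G T = (adjPairs G T).card := rfl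

theorem mem_adjPairs {T : Finset V} {p : V × V} :
    p ∈ adjPairs G T ↔ p.1 ∈ T ∧ p.2 ∈ T ∧ G.Adj p.1 p.2 := by
  simp [adjPairs, and_assoc]

theorem adjPairs_mono {S T : Finset V} (h : S ⊆ T) : adjPairs G S ⊆ adjPairs G T :=
  Finset.filter_subset_filter _ (Finset.product_subset_product h h)

theorem sum_adjPairs_swap (T : Finset V) (φ : V → V → ℝ) :
    ∑ p ∈ adjPairs G T, φ p.2 p.1 = ∑ p ∈ adjPairs G T, φ p.1 p.2 :=
  Finset.sum_nbij' Prod.swap Prod.swap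
    (fun p hp => by simp_all [mem_adjPairs, G.adj_comm])
    (fun p hp => by simp_all [mem_adjPairs, G.adj_comm])
    (fun _ _ => rfl) (fun _ _ => rfl) (fun _ _ => rfl)

/-- Layer cake: peeling off the minimum `m` of `g` over `T` costs `m · 2|E_T| ≤ m k |T|`. -/
theorem sum_adjPairs_min_le [DecidableEq V] {k : ℝ}
    (hsparse : ∀ W : Finset V, (edgesTwice G W : ℝ) ≤ k * W.card)
    (T : Finset V) {g : V → ℝ} (hg : ∀ x ∈ T, 0 ≤ g x) :
    ∑ p ∈ adjPairs G T, min (g p.1) (g p.2) ≤ k * ∑ x ∈ T, g x := by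
  induction T using Finset.strongInduction generalizing g with
  | H T ih =>
  rcases T.eq_empty_or_nonempty with rfl | hT
  · simp [adjPairs]
  obtain ⟨x₀, hx₀, hmin⟩ := T.exists_min_image g hT
  set m := g x₀
  set g' : V → ℝ := fun x => g x - m with hg'
  have hg'_nonneg : ∀ x ∈ T, 0 ≤ g' x := fun x hx => sub_nonneg.2 (hmin x hx)
  have hpairs : ∑ p ∈ adjPairs G T, min (g p.1) (g p.2)
      = ∑ p ∈ adjPairs G (T.erase x₀), min (g' p.1) (g' p.2) + m * edgesTwice G T := by
    have hshift : ∑ p ∈ adjPairs G T, min (g p.1) (g p.2)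
        = ∑ p ∈ adjPairs G T, min (g' p.1) (g' p.2) + m * edgesTwice G T := by
      simp [hg', min_sub_sub_right, edgesTwice_eq_card_adjPairs, mul_comm]
    rw [hshift, Finset.sum_subset (adjPairs_mono (T.erase_subset x₀))]
    intro p hp hp'
    obtain ⟨h₁, h₂, hadj⟩ := mem_adjPairs.1 hp
    have hx₀' : p.1 = x₀ ∨ p.2 = x₀ := by
      by_contra! hne
      exact hp' (mem_adjPairs.2
        ⟨Finset.mem_erase.2 ⟨hne.1, h₁⟩, Finset.mem_erase.2 ⟨hne.2, h₂⟩, hadj⟩)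
    rcases hx₀' with h | h
    · simp [hg', h, m, hmin p.2 h₂]
    · simp [hg', h, m, hmin p.1 h₁]
  have hsum : ∑ x ∈ T, g x = ∑ x ∈ T.erase x₀, g' x + m * T.card := by
    rw [Finset.sum_erase T (f := g') (by simp [hg', m])]
    simp [hg', Finset.sum_sub_distrib, mul_comm]
  calc ∑ p ∈ adjPairs G T, min (g p.1) (g p.2)
      ≤ k * ∑ x ∈ T.erase x₀, g' x + m * (k * T.card) := by
        rw [hpairs]
        exact add_le_add
          (ih _ (Finset.erase_ssubset hx₀) fun x hx => hg'_nonneg x (Finset.mem_of_mem_erase hx))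
          (mul_le_mul_of_nonneg_left (hsparse T) (hg x₀ hx₀))
    _ = k * ∑ x ∈ T, g x := by rw [hsum]; ring

theorem sum_adjPairs_fst [G.LocallyFinite] (T : Finset V) {g : V → ℝ}
    (hg : ∀ x y, g x ≠ 0 → G.Adj x y → y ∈ T) :
    ∑ p ∈ adjPairs G T, g p.1 = ∑ x ∈ T, G.degree x * g x := by
  rw [adjPairs, Finset.sum_filter, Finset.sum_product]
  refine Finset.sum_congr rfl fun x _ => ?_
  by_cases hx : g x = 0
  · simp [hx]
  dsimp only
  rw [← Finset.sum_filter, Finset.sum_const, nsmul_eq_mul, ← G.card_neighborFinset_eq_degree]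
  congr
  ext y
  simpa using fun h => hg x y hx h

end AdjPairs

section QuadraticForms

variable {V : Type*} {G : SimpleGraph V} {f : V → ℂ} {T : Finset V}

theorem qNormSq_eq_sum (hsupp : ∀ x, f x ≠ 0 → x ∈ T) : qNormSq f = ∑ x ∈ T, ‖f x‖ ^ 2 :=
  tsum_eq_sum fun x hx => by simp [not_imp_comm.1 (hsupp x) hx]

theorem qDeg_eq_sum [G.LocallyFinite] (hsupp : ∀ x, f x ≠ 0 → x ∈ T) :
    qDeg G f = ∑ x ∈ T, G.degree x * ‖f x‖ ^ 2 :=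
  tsum_eq_sum fun x hx => by simp [not_imp_comm.1 (hsupp x) hx]

theorem exists_finset_support_adj_subset [DecidableEq V] [G.LocallyFinite]
    (hf : (Function.support f).Finite) :
    ∃ T : Finset V, (∀ x, f x ≠ 0 → x ∈ T) ∧ ∀ x y, f x ≠ 0 → G.Adj x y → y ∈ T :=
  ⟨hf.toFinset ∪ hf.toFinset.biUnion fun x => G.neighborFinset x,
    fun x hx => Finset.mem_union_left _ (by simpa using hx),
    fun x y hx hxy =>
      Finset.mem_union_right _ (Finset.mem_biUnion.2 ⟨x, by simpa using hx, by simpa⟩)⟩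

variable [DecidableRel G.Adj]

theorem qLap_eq_sum_adjPairs (hsupp : ∀ x, f x ≠ 0 → x ∈ T)
    (hnbr : ∀ x y, f x ≠ 0 → G.Adj x y → y ∈ T) :
    qLap G f = 1 / 2 * ∑ p ∈ adjPairs G T, ‖f p.1 - f p.2‖ ^ 2 := by
  have hvan : ∀ x y, x ∉ T ∨ y ∉ T → (if G.Adj x y then ‖f x - f y‖ ^ 2 else 0) = 0 := by
    intro x y hxy
    split_ifs with hadj
    · have hx : f x = 0 := by
        rcases hxy with hx | hy
        · exact not_imp_comm.1 (hsupp x) hx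
        · exact not_imp_comm.1 (fun h => hnbr x y h hadj) hy
      have hy : f y = 0 := by
        rcases hxy with hx | hy
        · exact not_imp_comm.1 (fun h => hnbr y x h hadj.symm) hx
        · exact not_imp_comm.1 (hsupp y) hy
      simp [hx, hy]
    · rfl
  rw [qLap, adjPairs, Finset.sum_filter, Finset.sum_product,
    tsum_eq_sum fun x hx => by simp [hvan x _ (.inl hx)]]
  congr 1
  exact Finset.sum_congr rfl fun x _ => tsum_eq_sum fun y hy => hvan x y (.inr hy)

theorem sum_adjPairs_sq_norm_fst [G.LocallyFinite] (hnbr : ∀ x y, f x ≠ 0 → G.Adj x y → y ∈ T) :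
    ∑ p ∈ adjPairs G T, ‖f p.1‖ ^ 2 = ∑ x ∈ T, G.degree x * ‖f x‖ ^ 2 :=
  sum_adjPairs_fst (g := fun x => ‖f x‖ ^ 2) T fun x y hx => hnbr x y (by simpa using hx)

theorem qLap_eq_qDeg_sub [G.LocallyFinite] (hsupp : ∀ x, f x ≠ 0 → x ∈ T)
    (hnbr : ∀ x y, f x ≠ 0 → G.Adj x y → y ∈ T) :
    qLap G f = qDeg G f - ∑ p ∈ adjPairs G T, (f p.1 * starRingEnd ℂ (f p.2)).re := by
  rw [qLap_eq_sum_adjPairs hsupp hnbr]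
  simp only [Complex.sq_norm_sub, Finset.sum_sub_distrib, Finset.sum_add_distrib,
    ← Finset.mul_sum]
  rw [sum_adjPairs_swap T fun x _ => ‖f x‖ ^ 2, sum_adjPairs_sq_norm_fst hnbr, qDeg_eq_sum hsupp]
  ring

theorem abs_sum_adjPairs_re_le [DecidableEq V] [G.LocallyFinite] {k ε : ℝ}
    (hsparse : ∀ W : Finset V, (edgesTwice G W : ℝ) ≤ k * W.card) (hε0 : 0 < ε) (hε1 : ε ≤ 1)
    (hnbr : ∀ x y, f x ≠ 0 → G.Adj x y → y ∈ T) :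
    |∑ p ∈ adjPairs G T, (f p.1 * starRingEnd ℂ (f p.2)).re|
      ≤ ε * ∑ x ∈ T, G.degree x * ‖f x‖ ^ 2 + k / 2 * (1 / ε - ε) * ∑ x ∈ T, ‖f x‖ ^ 2 := by
  set c := (1 / ε - ε) / 2
  have hc : 0 ≤ c := by
    have : ε ≤ 1 / ε := by rw [le_div_iff₀ hε0]; nlinarith
    simp only [c]
    linarith
  calc |∑ p ∈ adjPairs G T, (f p.1 * starRingEnd ℂ (f p.2)).re|
      ≤ ∑ p ∈ adjPairs G T, ‖f p.1‖ * ‖f p.2‖ := by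
        refine (Finset.abs_sum_le_sum_abs _ _).trans (Finset.sum_le_sum fun p _ => ?_)
        simpa using Complex.abs_re_le_norm (f p.1 * starRingEnd ℂ (f p.2))
    _ ≤ ∑ p ∈ adjPairs G T,
          (ε / 2 * (‖f p.1‖ ^ 2 + ‖f p.2‖ ^ 2) + c * min (‖f p.1‖ ^ 2) (‖f p.2‖ ^ 2)) :=
        Finset.sum_le_sum fun p _ =>
          mul_le_half_mul_sq_add_min_sq hε0 (norm_nonneg _) (norm_nonneg _)
    _ = ε / 2 * (∑ p ∈ adjPairs G T, ‖f p.1‖ ^ 2 + ∑ p ∈ adjPairs G T, ‖f p.2‖ ^ 2)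
          + c * ∑ p ∈ adjPairs G T, min (‖f p.1‖ ^ 2) (‖f p.2‖ ^ 2) := by
        rw [Finset.sum_add_distrib, ← Finset.mul_sum, ← Finset.mul_sum, Finset.sum_add_distrib]
    _ ≤ ε / 2 * (2 * ∑ x ∈ T, G.degree x * ‖f x‖ ^ 2) + c * (k * ∑ x ∈ T, ‖f x‖ ^ 2) := by
        rw [sum_adjPairs_swap T fun x _ => ‖f x‖ ^ 2, sum_adjPairs_sq_norm_fst hnbr, two_mul]
        gcongr
        exact sum_adjPairs_min_le (g := fun x => ‖f x‖ ^ 2) hsparse T fun x _ => sq_nonneg _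
    _ = _ := by ring

theorem abs_qLap_sub_qDeg_le [DecidableEq V] [G.LocallyFinite] {k ε : ℝ}
    (hsparse : ∀ W : Finset V, (edgesTwice G W : ℝ) ≤ k * W.card) (hε0 : 0 < ε) (hε1 : ε ≤ 1)
    (hf : (Function.support f).Finite) :
    |qLap G f - qDeg G f| ≤ ε * qDeg G f + k / 2 * (1 / ε - ε) * qNormSq f := by
  obtain ⟨T, hsupp, hnbr⟩ := exists_finset_support_adj_subset (G := G) hf
  rw [qLap_eq_qDeg_sub hsupp hnbr, sub_sub_cancel_left, abs_neg, qDeg_eq_sum hsupp,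
    qNormSq_eq_sum hsupp]
  exact abs_sum_adjPairs_re_le hsparse hε0 hε1 hnbr

end QuadraticForms

noncomputable section

variable {V : Type*} [DecidableEq V] (G : SimpleGraph V) [DecidableRel G.Adj]

variable [G.LocallyFinite]

theorem stmt0 (q : V → ℝ) (hq : ∀ x, 0 ≤ q x) (k : ℝ)
    (hsparse : ∀ W : Finset V, (edgesTwice G W : ℝ) ≤ k * W.card)
    (ε : ℝ) (hε0 : 0 < ε) (hε1 : ε ≤ 1)
    (f : V → ℂ) (hf : (Function.support f).Finite) :
    (1 - ε) * (qDeg G f + qPot q f) - k / 2 * (1 / ε - ε) * qNormSq f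
        ≤ qLap G f + qPot q f ∧
      qLap G f + qPot q f
        ≤ (1 + ε) * (qDeg G f + qPot q f) + k / 2 * (1 / ε - ε) * qNormSq f := by
  have hbound := abs_le.1 (abs_qLap_sub_qDeg_le hsparse hε0 hε1 hf)
  have hpot : 0 ≤ ε * qPot q f :=
    mul_nonneg hε0.le (tsum_nonneg fun x => mul_nonneg (hq x) (sq_nonneg _))
  constructor <;> linarith [hbound.1, hbound.2]

end
end

section
/- Let G = (V,E) be a locally finite graph and q : V → ℝ. If there are ã ∈ (0,1) and k̃ ≥ 0 such that for all finitely supported f : V → ℂ one has (1−ã)(Q_deg(f) + Q_q(f)) − k̃·‖f‖² ≤ Q_Δ(f) + Q_q(f), then (G,q) is (a,k)-sparse with a = ã/(1−ã) and k = k̃/(1−ã). -/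
open scoped BigOperators

noncomputable section

variable {V : Type*} [DecidableEq V] (G : SimpleGraph V) [DecidableRel G.Adj]

variable [G.LocallyFinite]

/-- if `(1-ã)(Q_deg(f)+Q_q(f)) - k̃‖f‖² ≤ Q_Δ(f)+Q_q(f)` for all finitely
supported `f`, then `(G,q)` is `(a,k)`-sparse with `a = ã/(1-ã)` and `k = k̃/(1-ã)`. -/
theorem stmt2 [Countable V] (q : V → ℝ) (ta tk : ℝ) (hta0 : 0 < ta) (hta1 : ta < 1)
    (htk : 0 ≤ tk)
    (h : ∀ f : V → ℂ, (Function.support f).Finite →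
      (1 - ta) * (qDeg G f + qPot q f) - tk * qNormSq f ≤ qLap G f + qPot q f) :
    IsSparse G q (ta / (1 - ta)) (tk / (1 - ta)) := by
  intro W
  classical
  set f : V → ℂ := fun x => if x ∈ W then 1 else 0 with hfdef
  have hfW' : ∀ x, x ∉ W → f x = 0 := fun x hx => by simp [hfdef, hx]
  have hsupp : (Function.support f).Finite := by
    apply Set.Finite.subset W.finite_toSet
    intro x hx
    by_contra hxW
    exact hx (hfW' x hxW)
  have hnsq : ∀ x, ‖f x‖ ^ 2 = if x ∈ W then (1:ℝ) else 0 := by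
    intro x; by_cases hx : x ∈ W <;> simp [hfdef, hx]
  have hN : qNormSq f = (W.card : ℝ) := by
    rw [qNormSq, tsum_eq_sum (s := W) (fun x hx => by rw [hnsq x, if_neg hx])]
    rw [Finset.sum_congr rfl
      (fun x hx => by rw [hnsq x, if_pos hx] : ∀ x ∈ W, ‖f x‖ ^ 2 = 1)]
    simp
  have hP : qPot q f = ∑ x ∈ W, q x := by
    rw [qPot, tsum_eq_sum (s := W) (fun x hx => by rw [hnsq x, if_neg hx, mul_zero])]
    exact Finset.sum_congr rfl fun x hx => by rw [hnsq x, if_pos hx, mul_one]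
  have hE2 : (edgesTwice G W : ℝ)
      = ∑ x ∈ W, (((G.neighborFinset x).filter (fun y => y ∈ W)).card : ℝ) := by
    rw [edgesTwice, Finset.card_filter, Finset.sum_product]
    push_cast
    refine Finset.sum_congr rfl fun x hx => ?_
    rw [Finset.card_filter]
    push_cast
    rw [← Finset.sum_filter, ← Finset.sum_filter]
    congr 1
    ext y
    simp [SimpleGraph.mem_neighborFinset, and_comm]
  have hD : qDeg G f = (edgesTwice G W : ℝ) + (bdryCard G W : ℝ) := by
    rw [qDeg, tsum_eq_sum (s := W) (fun x hx => by rw [hnsq x, if_neg hx, mul_zero])]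
    rw [Finset.sum_congr rfl
      (fun x hx => by rw [hnsq x, if_pos hx, mul_one] :
        ∀ x ∈ W, (G.degree x : ℝ) * ‖f x‖ ^ 2 = (G.degree x : ℝ))]
    rw [hE2, bdryCard]
    push_cast
    rw [← Finset.sum_add_distrib]
    refine Finset.sum_congr rfl fun x hx => ?_
    have := Finset.card_filter_add_card_filter_not
      (s := G.neighborFinset x) (p := fun y => y ∈ W)
    rw [SimpleGraph.card_neighborFinset_eq_degree] at this
    push_cast [← this]
    ring
  -- the support set for the Laplacian sum
  set S : Finset V := W ∪ W.biUnion (fun y => G.neighborFinset y) with hSdef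
  have hWS : W ⊆ S := Finset.subset_union_left
  have hadjS : ∀ x y, y ∈ W → G.Adj x y → x ∈ S := fun x y hy hadj =>
    Finset.mem_union_right _ (Finset.mem_biUnion.mpr
      ⟨y, hy, (SimpleGraph.mem_neighborFinset _ _ _).mpr hadj.symm⟩)
  have hinner : ∀ x : V, (∑' y, if G.Adj x y then ‖f x - f y‖ ^ 2 else 0)
      = ∑ y ∈ G.neighborFinset x, ‖f x - f y‖ ^ 2 := by
    intro x
    rw [tsum_eq_sum (s := G.neighborFinset x) (fun y hy => if_neg (by simpa using hy))]
    exact Finset.sum_congr rfl fun y hy => if_pos (by simpa using hy)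
  have hL : qLap G f = (bdryCard G W : ℝ) := by
    rw [qLap, tsum_congr hinner, tsum_eq_sum (s := S) (by
      intro x hx
      refine Finset.sum_eq_zero fun y hy => ?_
      have hxW : x ∉ W := fun hxW => hx (hWS hxW)
      have hyW : y ∉ W := fun hyW => hx (hadjS x y hyW (by simpa using hy))
      simp [hfW' x hxW, hfW' y hyW])]
    have hterm : ∀ x y, ‖f x - f y‖ ^ 2
        = (if x ∈ W ∧ y ∉ W then (1:ℝ) else 0) + (if y ∈ W ∧ x ∉ W then (1:ℝ) else 0) := by
      intro x y; by_cases hx : x ∈ W <;> by_cases hy : y ∈ W <;> simp [hfdef, hx, hy]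
    have hsplit : ∑ x ∈ S, ∑ y ∈ G.neighborFinset x, ‖f x - f y‖ ^ 2
        = (∑ x ∈ S, ∑ y ∈ G.neighborFinset x, (if x ∈ W ∧ y ∉ W then (1:ℝ) else 0))
        + (∑ x ∈ S, ∑ y ∈ G.neighborFinset x, (if y ∈ W ∧ x ∉ W then (1:ℝ) else 0)) := by
      rw [← Finset.sum_add_distrib]
      refine Finset.sum_congr rfl fun x _ => ?_
      rw [← Finset.sum_add_distrib]
      exact Finset.sum_congr rfl fun y _ => hterm x y
    have h1 : ∑ x ∈ S, ∑ y ∈ G.neighborFinset x, (if x ∈ W ∧ y ∉ W then (1:ℝ) else 0)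
        = (bdryCard G W : ℝ) := by
      rw [← Finset.sum_subset hWS (by
        intro x _ hxW
        exact Finset.sum_eq_zero fun y _ => by simp [hxW])]
      rw [bdryCard]
      push_cast
      refine Finset.sum_congr rfl fun x hx => ?_
      rw [Finset.card_filter]
      push_cast
      exact Finset.sum_congr rfl fun y _ => by simp [hx]
    have h2 : ∑ x ∈ S, ∑ y ∈ G.neighborFinset x, (if y ∈ W ∧ x ∉ W then (1:ℝ) else 0)
        = (bdryCard G W : ℝ) := by
      have step1 : ∀ x, ∑ y ∈ G.neighborFinset x, (if y ∈ W ∧ x ∉ W then (1:ℝ) else 0)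
          = ∑ y ∈ W, (if G.Adj x y ∧ x ∉ W then (1:ℝ) else 0) := by
        intro x
        rw [← Finset.sum_filter, ← Finset.sum_filter]
        congr 1
        ext y
        simp only [Finset.mem_filter, SimpleGraph.mem_neighborFinset]
        tauto
      simp only [step1]
      rw [Finset.sum_comm, bdryCard]
      push_cast
      refine Finset.sum_congr rfl fun y hy => ?_
      rw [Finset.card_filter]
      push_cast
      rw [← Finset.sum_filter, ← Finset.sum_filter]
      congr 1
      ext x
      simp only [Finset.mem_filter, SimpleGraph.mem_neighborFinset]
      constructor
      · rintro ⟨_, hadj, hxW⟩; exact ⟨hadj.symm, hxW⟩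
      · rintro ⟨hadj, hxW⟩; exact ⟨hadjS x y hy hadj.symm, hadj.symm, hxW⟩
    rw [hsplit, h1, h2]
    ring
  have key := h f hsupp
  rw [hN, hP, hD, hL] at key
  have hPle : (∑ x ∈ W, q x) ≤ ∑ x ∈ W, max (q x) 0 :=
    Finset.sum_le_sum fun x _ => le_max_left _ _
  have h1ta : (0:ℝ) < 1 - ta := by linarith
  rw [show tk / (1 - ta) * (W.card : ℝ)
      + ta / (1 - ta) * ((bdryCard G W : ℝ) + ∑ x ∈ W, max (q x) 0)
      = (tk * (W.card : ℝ) + ta * ((bdryCard G W : ℝ) + ∑ x ∈ W, max (q x) 0)) / (1 - ta)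
      from by ring]
  rw [le_div_iff₀ h1ta]
  nlinarith [key, mul_le_mul_of_nonneg_left hPle hta0.le]


end
end

section
/- Let G = (V,E) be a locally finite graph, q : V → [0,∞), and k ≥ 0, and assume (G,q) is (0,k)-sparse (i.e. 2|E_W| ≤ k|W| for all finite W ⊆ V). Then for every ã ∈ (0,1), setting k̃ := (k/2)(1/ã − ã), one has for all finitely supported f : V → ℂ: (1−ã)(Q_deg(f) + Q_q(f)) − k̃·‖f‖² ≤ Q_Δ(f) + Q_q(f) ≤ (1+ã)(Q_deg(f) + Q_q(f)) + k̃·‖f‖². -/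
open scoped BigOperators

noncomputable section

variable {V : Type*} [DecidableEq V] (G : SimpleGraph V) [DecidableRel G.Adj]

variable [G.LocallyFinite]

set_option linter.unusedSectionVars false
set_option maxHeartbeats 1000000

lemma pair_bound' (ta : ℝ) (hta0 : 0 < ta) (u v : ℂ) :
    (1 - ta) * (‖u‖^2 + ‖v‖^2) - (1/ta - ta) * min (‖u‖^2) (‖v‖^2) ≤ ‖u - v‖^2 ∧
    ‖u - v‖^2 ≤ (1 + ta) * (‖u‖^2 + ‖v‖^2) + (1/ta - ta) * min (‖u‖^2) (‖v‖^2) := by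
  have ha : (0:ℝ) ≤ ‖u‖ := norm_nonneg u
  have hb : (0:ℝ) ≤ ‖v‖ := norm_nonneg v
  have hc : (0:ℝ) ≤ ‖u - v‖ := norm_nonneg (u - v)
  have h1 : ‖u - v‖ ≤ ‖u‖ + ‖v‖ := norm_sub_le u v
  have h2 : |‖u‖ - ‖v‖| ≤ ‖u - v‖ := abs_norm_sub_norm_le u v
  have h2a : ‖u‖ - ‖v‖ ≤ ‖u - v‖ := (abs_le.mp h2).2
  have h2b : -(‖u - v‖) ≤ ‖u‖ - ‖v‖ := (abs_le.mp h2).1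
  have hr : ta * (1/ta) = 1 := by field_simp
  have key : 2*(‖u‖*‖v‖) ≤ ta*(‖u‖^2+‖v‖^2) + (1/ta - ta) * min (‖u‖^2) (‖v‖^2) := by
    rcases le_total ‖u‖ ‖v‖ with hab | hab
    · rw [min_eq_left (by nlinarith : ‖u‖^2 ≤ ‖v‖^2)]
      nlinarith [sq_nonneg (ta*‖v‖ - ‖u‖), hr, hta0.le, mul_pos hta0 hta0]
    · rw [min_eq_right (by nlinarith : ‖v‖^2 ≤ ‖u‖^2)]
      nlinarith [sq_nonneg (ta*‖u‖ - ‖v‖), hr, hta0.le, mul_pos hta0 hta0]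
  have hup : ‖u - v‖^2 ≤ ‖u‖^2 + ‖v‖^2 + 2*(‖u‖*‖v‖) := by nlinarith
  have hlo : ‖u‖^2 + ‖v‖^2 - 2*(‖u‖*‖v‖) ≤ ‖u - v‖^2 := by nlinarith
  constructor <;> linarith

lemma edgesTwice_eq_sum' (W : Finset V) :
    (edgesTwice G W : ℝ) = ∑ x ∈ W, ∑ y ∈ W, (if G.Adj x y then (1:ℝ) else 0) := by
  rw [edgesTwice, Finset.card_filter]
  push_cast
  rw [Finset.sum_product]

lemma minsum_aux' (k : ℝ)
    (hsp : ∀ W : Finset V, (edgesTwice G W : ℝ) ≤ k * W.card) :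
    ∀ n : ℕ, ∀ g : V → ℝ, (∀ x, 0 ≤ g x) → ∀ s : Finset V,
      (∀ x, x ∉ s → g x = 0) → (∀ x ∈ s, g x ≠ 0) → s.card ≤ n →
      ∑ x ∈ s, ∑ y ∈ s, (if G.Adj x y then min (g x) (g y) else 0) ≤ k * ∑ x ∈ s, g x := by
  intro n
  induction n with
  | zero =>
    intro g hg s hs0 hsne hcard
    have : s = ∅ := Finset.card_eq_zero.mp (Nat.le_zero.mp hcard)
    subst this; simp
  | succ n ih =>
    intro g hg s hs0 hsne hcard
    rcases s.eq_empty_or_nonempty with rfl | hne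
    · simp
    · set m := s.inf' hne g with hm
      have hmpos : 0 < m := by
        obtain ⟨x₀, hx₀, hx₀e⟩ := Finset.exists_mem_eq_inf' hne g
        rw [hm, hx₀e]
        exact lt_of_le_of_ne (hg x₀) (Ne.symm (hsne x₀ hx₀))
      have hmle : ∀ x ∈ s, m ≤ g x := fun x hx => Finset.inf'_le g hx
      set g' : V → ℝ := fun x => if x ∈ s then g x - m else 0 with hg'
      have hg'nonneg : ∀ x, 0 ≤ g' x := by
        intro x; simp only [hg']
        split
        · next h => linarith [hmle x h]
        · exact le_refl 0
      set s' : Finset V := s.filter (fun x => g' x ≠ 0) with hs'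
      have hs'sub : s' ⊆ s := Finset.filter_subset _ _
      have hs'card : s'.card < s.card := by
        obtain ⟨x₀, hx₀, hx₀e⟩ := Finset.exists_mem_eq_inf' hne g
        apply Finset.card_lt_card
        refine ⟨hs'sub, fun hsub => ?_⟩
        have hx₀' : x₀ ∈ s' := hsub hx₀
        rw [hs', Finset.mem_filter] at hx₀'
        apply hx₀'.2
        simp only [hg', if_pos hx₀, ← hx₀e, hm]; ring
      have step1 : ∑ x ∈ s, ∑ y ∈ s, (if G.Adj x y then min (g x) (g y) else 0)
          = m * (edgesTwice G s : ℝ)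
            + ∑ x ∈ s, ∑ y ∈ s, (if G.Adj x y then min (g' x) (g' y) else 0) := by
        rw [edgesTwice_eq_sum', Finset.mul_sum, ← Finset.sum_add_distrib]
        refine Finset.sum_congr rfl fun x hx => ?_
        rw [Finset.mul_sum, ← Finset.sum_add_distrib]
        refine Finset.sum_congr rfl fun y hy => ?_
        by_cases hadj : G.Adj x y
        · simp only [if_pos hadj]
          have e1 : g' x = g x - m := by simp only [hg', if_pos hx]
          have e2 : g' y = g y - m := by simp only [hg', if_pos hy]
          rw [e1, e2, min_sub_sub_right]; ring
        · simp [hadj]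
      have hzero : ∀ x, g' x = 0 → ∀ y, (if G.Adj x y then min (g' x) (g' y) else 0) = 0 := by
        intro x hx y
        by_cases hadj : G.Adj x y
        · simp [hadj, hx, min_eq_left (hg'nonneg y)]
        · simp [hadj]
      have hzero' : ∀ y, g' y = 0 → ∀ x, (if G.Adj x y then min (g' x) (g' y) else 0) = 0 := by
        intro y hy x
        by_cases hadj : G.Adj x y
        · simp [hadj, hy, min_eq_right (hg'nonneg x)]
        · simp [hadj]
      have hnotin : ∀ x ∈ s, x ∉ s' → g' x = 0 := by
        intro x hx hnx
        by_contra hne'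
        exact hnx (Finset.mem_filter.mpr ⟨hx, hne'⟩)
      have step2 : ∑ x ∈ s, ∑ y ∈ s, (if G.Adj x y then min (g' x) (g' y) else 0)
          = ∑ x ∈ s', ∑ y ∈ s', (if G.Adj x y then min (g' x) (g' y) else 0) := by
        rw [← Finset.sum_subset hs'sub (fun x hx hnx =>
          Finset.sum_eq_zero (fun y _ => hzero x (hnotin x hx hnx) y))]
        refine Finset.sum_congr rfl fun x _ => ?_
        exact (Finset.sum_subset hs'sub (fun y hy hny => hzero' y (hnotin y hy hny) x)).symm
      have ihapp : ∑ x ∈ s', ∑ y ∈ s', (if G.Adj x y then min (g' x) (g' y) else 0)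
          ≤ k * ∑ x ∈ s', g' x := by
        refine ih g' hg'nonneg s' ?_ ?_ ?_
        · intro x hx
          by_cases hxs : x ∈ s
          · exact hnotin x hxs hx
          · simp only [hg', if_neg hxs]
        · intro x hx; exact (Finset.mem_filter.mp hx).2
        · omega
      have hsum' : ∑ x ∈ s', g' x = ∑ x ∈ s, g x - m * s.card := by
        rw [Finset.sum_subset hs'sub (fun x hx hnx => hnotin x hx hnx)]
        have : ∑ x ∈ s, g' x = ∑ x ∈ s, (g x - m) := by
          refine Finset.sum_congr rfl fun x hx => ?_
          simp only [hg', if_pos hx]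
        rw [this, Finset.sum_sub_distrib, Finset.sum_const, nsmul_eq_mul]
        ring
      have hE : m * (edgesTwice G s : ℝ) ≤ k * (m * s.card) := by
        have := mul_le_mul_of_nonneg_left (hsp s) hmpos.le
        nlinarith [this]
      have hkg' : k * ∑ x ∈ s', g' x = k * ∑ x ∈ s, g x - k * (m * s.card) := by
        rw [hsum']; ring
      rw [step1, step2]
      linarith [ihapp, hE, hkg']

lemma minsum' (k : ℝ)
    (hsp : ∀ W : Finset V, (edgesTwice G W : ℝ) ≤ k * W.card)
    (g : V → ℝ) (hg : ∀ x, 0 ≤ g x) (s : Finset V) (hs0 : ∀ x, x ∉ s → g x = 0) :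
    ∑ x ∈ s, ∑ y ∈ s, (if G.Adj x y then min (g x) (g y) else 0) ≤ k * ∑ x ∈ s, g x := by
  set s' : Finset V := s.filter (fun x => g x ≠ 0) with hs'
  have hs'sub : s' ⊆ s := Finset.filter_subset _ _
  have hnotin : ∀ x ∈ s, x ∉ s' → g x = 0 := by
    intro x hx hnx
    by_contra hne'
    exact hnx (Finset.mem_filter.mpr ⟨hx, hne'⟩)
  have hzero : ∀ x, g x = 0 → ∀ y, (if G.Adj x y then min (g x) (g y) else 0) = 0 := by
    intro x hx y
    by_cases hadj : G.Adj x y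
    · simp [hadj, hx, min_eq_left (hg y)]
    · simp [hadj]
  have hzero' : ∀ y, g y = 0 → ∀ x, (if G.Adj x y then min (g x) (g y) else 0) = 0 := by
    intro y hy x
    by_cases hadj : G.Adj x y
    · simp [hadj, hy, min_eq_right (hg x)]
    · simp [hadj]
  have step2 : ∑ x ∈ s, ∑ y ∈ s, (if G.Adj x y then min (g x) (g y) else 0)
      = ∑ x ∈ s', ∑ y ∈ s', (if G.Adj x y then min (g x) (g y) else 0) := by
    rw [← Finset.sum_subset hs'sub (fun x hx hnx =>
      Finset.sum_eq_zero (fun y _ => hzero x (hnotin x hx hnx) y))]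
    refine Finset.sum_congr rfl fun x _ => ?_
    exact (Finset.sum_subset hs'sub (fun y hy hny => hzero' y (hnotin y hy hny) x)).symm
  have hsum : ∑ x ∈ s', g x = ∑ x ∈ s, g x :=
    Finset.sum_subset hs'sub (fun x hx hnx => hnotin x hx hnx)
  rw [step2, ← hsum]
  refine minsum_aux' G k hsp s'.card g hg s' ?_ ?_ le_rfl
  · intro x hx
    by_cases hxs : x ∈ s
    · exact hnotin x hxs hx
    · exact hs0 x hxs
  · intro x hx; exact (Finset.mem_filter.mp hx).2

/-- if `(G,q)` is `(0,k)`-sparse with `q ≥ 0`, then for every `ã ∈ (0,1)`,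
with `k̃ := (k/2)(1/ã - ã)`, one has
`(1-ã)(Q_deg(f)+Q_q(f)) - k̃‖f‖² ≤ Q_Δ(f)+Q_q(f) ≤ (1+ã)(Q_deg(f)+Q_q(f)) + k̃‖f‖²`. -/
theorem stmt3 [Countable V] (q : V → ℝ) (hq : ∀ x, 0 ≤ q x) (k : ℝ) (hk : 0 ≤ k)
    (hsparse : IsSparse G q 0 k)
    (ta : ℝ) (hta0 : 0 < ta) (hta1 : ta < 1)
    (f : V → ℂ) (hf : (Function.support f).Finite) :
    (1 - ta) * (qDeg G f + qPot q f) - k / 2 * (1 / ta - ta) * qNormSq f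
        ≤ qLap G f + qPot q f ∧
      qLap G f + qPot q f
        ≤ (1 + ta) * (qDeg G f + qPot q f) + k / 2 * (1 / ta - ta) * qNormSq f := by

  classical
  set S : Finset V := hf.toFinset with hSdef
  have hS : ∀ x, f x ≠ 0 → x ∈ S := fun x h => hf.mem_toFinset.mpr h
  set T : Finset V := S ∪ S.biUnion (fun x => G.neighborFinset x) with hTdef
  have hST : S ⊆ T := Finset.subset_union_left
  have hT2 : ∀ x ∈ S, ∀ y, G.Adj x y → y ∈ T := fun x hx y hadj =>
    Finset.mem_union_right _ (Finset.mem_biUnion.mpr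
      ⟨x, hx, (SimpleGraph.mem_neighborFinset G x y).mpr hadj⟩)
  have hfT : ∀ x, x ∉ T → f x = 0 := by
    intro x hx
    by_contra h
    exact hx (hST (hS x h))
  -- tsum reductions
  have hN : qNormSq f = ∑ x ∈ T, ‖f x‖ ^ 2 := by
    refine tsum_eq_sum fun x hx => ?_
    rw [hfT x hx]; simp
  have hP : qPot q f = ∑ x ∈ T, q x * ‖f x‖ ^ 2 := by
    refine tsum_eq_sum fun x hx => ?_
    rw [hfT x hx]; simp
  have hD : qDeg G f = ∑ x ∈ T, (G.degree x : ℝ) * ‖f x‖ ^ 2 := by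
    refine tsum_eq_sum fun x hx => ?_
    rw [hfT x hx]; simp
  have hφy : ∀ x y, y ∉ T → (if G.Adj x y then ‖f x - f y‖ ^ 2 else 0) = 0 := by
    intro x y hy
    by_cases hadj : G.Adj x y
    · have hfy : f y = 0 := by
        by_contra h; exact hy (hST (hS y h))
      have hfx : f x = 0 := by
        by_contra h; exact hy (hT2 x (hS x h) y hadj)
      simp [hadj, hfx, hfy]
    · simp [hadj]
  have hφx : ∀ x, x ∉ T → ∀ y, (if G.Adj x y then ‖f x - f y‖ ^ 2 else 0) = 0 := by
    intro x hx y
    by_cases hadj : G.Adj x y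
    · have hfx : f x = 0 := hfT x hx
      have hfy : f y = 0 := by
        by_contra h; exact hx (hT2 y (hS y h) x hadj.symm)
      simp [hadj, hfx, hfy]
    · simp [hadj]
  have hL : qLap G f = (1/2) * ∑ x ∈ T, ∑ y ∈ T, (if G.Adj x y then ‖f x - f y‖ ^ 2 else 0) := by
    rw [qLap]
    congr 1
    rw [tsum_congr (fun x => tsum_eq_sum (fun y hy => hφy x y hy))]
    exact tsum_eq_sum fun x hx => Finset.sum_eq_zero fun y _ => hφx x hx y
  -- abbreviations
  set A : ℝ := ∑ x ∈ T, ∑ y ∈ T, (if G.Adj x y then ‖f x - f y‖ ^ 2 else 0) with hA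
  set D : ℝ := ∑ x ∈ T, (G.degree x : ℝ) * ‖f x‖ ^ 2 with hDd
  set M : ℝ := ∑ x ∈ T, ∑ y ∈ T, (if G.Adj x y then min (‖f x‖ ^ 2) (‖f y‖ ^ 2) else 0) with hMd
  set N : ℝ := ∑ x ∈ T, ‖f x‖ ^ 2 with hNd
  set P : ℝ := ∑ x ∈ T, q x * ‖f x‖ ^ 2 with hPd
  -- the degree identity
  have hdegx : ∑ x ∈ T, ∑ y ∈ T, (if G.Adj x y then ‖f x‖ ^ 2 else 0) = D := by
    refine Finset.sum_congr rfl fun x hx => ?_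
    by_cases hfx : f x = 0
    · simp [hfx]
    · have hTx : T.filter (fun y => G.Adj x y) = G.neighborFinset x := by
        ext y
        simp only [Finset.mem_filter, SimpleGraph.mem_neighborFinset]
        exact ⟨fun h => h.2, fun h => ⟨hT2 x (hS x hfx) y h, h⟩⟩
      rw [← Finset.sum_filter, hTx, Finset.sum_const, nsmul_eq_mul,
        SimpleGraph.card_neighborFinset_eq_degree]
  have hdegy : ∑ x ∈ T, ∑ y ∈ T, (if G.Adj x y then ‖f y‖ ^ 2 else 0) = D := by
    rw [Finset.sum_comm, ← hdegx]
    refine Finset.sum_congr rfl fun x _ => Finset.sum_congr rfl fun y _ => ?_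
    by_cases h : G.Adj x y
    · rw [if_pos h.symm, if_pos h]
    · rw [if_neg (fun hh => h hh.symm), if_neg h]
  -- bound on M
  have hsp : ∀ W : Finset V, (edgesTwice G W : ℝ) ≤ k * W.card := by
    intro W
    have := hsparse W
    simpa using this
  have hM : M ≤ k * N := by
    rw [hMd, hNd]
    exact minsum' G k hsp (fun x => ‖f x‖ ^ 2) (fun x => sq_nonneg _) T
      (fun x hx => by simp [hfT x hx])
  -- bounds on A
  have hc0 : 0 ≤ 1/ta - ta := by
    have : ta ≤ 1/ta := by
      rw [le_div_iff₀ hta0]; nlinarith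
    linarith
  have hAub : A ≤ (1+ta) * D + (1+ta) * D + (1/ta - ta) * M := by
    have hterm : ∀ x ∈ T, ∀ y ∈ T, (if G.Adj x y then ‖f x - f y‖ ^ 2 else 0)
        ≤ (1+ta) * (if G.Adj x y then ‖f x‖ ^ 2 else 0)
          + (1+ta) * (if G.Adj x y then ‖f y‖ ^ 2 else 0)
          + (1/ta - ta) * (if G.Adj x y then min (‖f x‖ ^ 2) (‖f y‖ ^ 2) else 0) := by
      intro x _ y _
      by_cases hadj : G.Adj x y
      · simp only [if_pos hadj]
        have := (pair_bound' ta hta0 (f x) (f y)).2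
        linarith
      · simp [hadj]
    calc A ≤ ∑ x ∈ T, ∑ y ∈ T, ((1+ta) * (if G.Adj x y then ‖f x‖ ^ 2 else 0)
          + (1+ta) * (if G.Adj x y then ‖f y‖ ^ 2 else 0)
          + (1/ta - ta) * (if G.Adj x y then min (‖f x‖ ^ 2) (‖f y‖ ^ 2) else 0)) := by
            refine Finset.sum_le_sum fun x hx => Finset.sum_le_sum fun y hy => hterm x hx y hy
      _ = (1+ta) * D + (1+ta) * D + (1/ta - ta) * M := by
            simp only [Finset.sum_add_distrib, ← Finset.mul_sum]
            rw [hdegx, hdegy, hMd]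
  have hAlb : (1-ta) * D + (1-ta) * D - (1/ta - ta) * M ≤ A := by
    have hterm : ∀ x ∈ T, ∀ y ∈ T,
        (1-ta) * (if G.Adj x y then ‖f x‖ ^ 2 else 0)
          + (1-ta) * (if G.Adj x y then ‖f y‖ ^ 2 else 0)
          - (1/ta - ta) * (if G.Adj x y then min (‖f x‖ ^ 2) (‖f y‖ ^ 2) else 0)
        ≤ (if G.Adj x y then ‖f x - f y‖ ^ 2 else 0) := by
      intro x _ y _
      by_cases hadj : G.Adj x y
      · simp only [if_pos hadj]
        have := (pair_bound' ta hta0 (f x) (f y)).1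
        linarith
      · simp [hadj]
    calc (1-ta) * D + (1-ta) * D - (1/ta - ta) * M
        = ∑ x ∈ T, ∑ y ∈ T, ((1-ta) * (if G.Adj x y then ‖f x‖ ^ 2 else 0)
          + (1-ta) * (if G.Adj x y then ‖f y‖ ^ 2 else 0)
          - (1/ta - ta) * (if G.Adj x y then min (‖f x‖ ^ 2) (‖f y‖ ^ 2) else 0)) := by
            simp only [Finset.sum_sub_distrib, Finset.sum_add_distrib, ← Finset.mul_sum]
            rw [hdegx, hdegy, hMd]
      _ ≤ A := Finset.sum_le_sum fun x hx => Finset.sum_le_sum fun y hy => hterm x hx y hy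
  -- positivity
  have hP0 : 0 ≤ P := Finset.sum_nonneg fun x _ => mul_nonneg (hq x) (sq_nonneg _)
  have hN0 : 0 ≤ N := Finset.sum_nonneg fun x _ => sq_nonneg _
  have htaP : 0 ≤ ta * P := mul_nonneg hta0.le hP0
  have hcM : (1/ta - ta) * M ≤ (1/ta - ta) * (k * N) := mul_le_mul_of_nonneg_left hM hc0
  have hkey : k / 2 * (1 / ta - ta) * N = (1/2) * ((1/ta - ta) * (k * N)) := by ring
  rw [hL, hN, hP, hD]
  constructor <;> nlinarith [hAub, hAlb, hcM, htaP, hkey]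

end
end

section
/- Let G = (V,E) be a locally finite graph, q : V → [0,∞), a > 0 and k ≥ 0, and assume (G,q) is (a,k)-sparse. Set ã := √(min(1/4, a²) + 2a + a²)/(1+a) and k̃ := max( max(3/2, 1/a − a)·k/(2(1+a)), 2k(1−ã) ). Then ã ∈ (0,1) and for all finitely supported f : V → ℂ: (1−ã)(Q_deg(f) + Q_q(f)) − k̃·‖f‖² ≤ Q_Δ(f) + Q_q(f) ≤ (1+ã)(Q_deg(f) + Q_q(f)) + k̃·‖f‖². -/
open scoped BigOperators

noncomputable section

variable {V : Type*} [DecidableEq V] (G : SimpleGraph V) [DecidableRel G.Adj]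

variable [G.LocallyFinite]

set_option maxHeartbeats 1600000

section Aux

private lemma keyKF (a k ta tk : ℝ) (ha : 0 < a) (hk : 0 ≤ k)
    (hta : ta = Real.sqrt (min (1 / 4) (a ^ 2) + 2 * a + a ^ 2) / (1 + a))
    (htk : tk = max (max (3 / 2) (1 / a - a) * k / (2 * (1 + a))) (2 * k * (1 - ta))) :
    k ≤ ((1 + a) * tk) * (Real.sqrt (min (1 / 4) (a ^ 2) + 2 * a + a ^ 2)
        + Real.sqrt (min (1 / 4) (a ^ 2))) := by
  have h1a : (0:ℝ) < 1 + a := by linarith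
  set m := min (1 / 4) (a ^ 2) with hm
  set w := Real.sqrt (m + 2 * a + a ^ 2) with hwdef
  set r := Real.sqrt m with hrdef
  have hw0 : 0 ≤ w := Real.sqrt_nonneg _
  have hr0 : 0 ≤ r := Real.sqrt_nonneg _
  have hβ : max (3 / 2) (1 / a - a) * k / 2 ≤ (1 + a) * tk := by
    have h : max (3 / 2) (1 / a - a) * k / (2 * (1 + a)) ≤ tk := by
      rw [htk]; exact le_max_left _ _
    calc max (3 / 2) (1 / a - a) * k / 2
        = (1 + a) * (max (3 / 2) (1 / a - a) * k / (2 * (1 + a))) := by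
          field_simp
      _ ≤ (1 + a) * tk := by nlinarith [h]
  rcases le_or_gt a (1/2) with hhalf | hhalf
  · -- m = a², r = a
    have hma : m = a ^ 2 := min_eq_right (by nlinarith)
    have hra : r = a := by rw [hrdef, hma, Real.sqrt_sq ha.le]
    have hw2 : w ^ 2 = 2 * a + 2 * a ^ 2 := by
      rw [hwdef, hma, Real.sq_sqrt (by nlinarith)]; ring
    have hsq : (a * (1 + a ^ 2)) ^ 2 ≤ ((1 - a ^ 2) * w) ^ 2 := by
      have h : ((1 - a ^ 2) * w) ^ 2 = (1 - a ^ 2) ^ 2 * (2 * a + 2 * a ^ 2) := by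
        rw [mul_pow, hw2]
      rw [h]
      nlinarith [mul_pos ha ha, sq_nonneg (1 - a^2), hhalf, ha.le,
        mul_nonneg (mul_nonneg ha.le ha.le) (by linarith : (0:ℝ) ≤ 1/2 - a)]
    have hkey : a * (1 + a ^ 2) ≤ (1 - a ^ 2) * w := by
      have h1 : 0 ≤ a * (1 + a ^ 2) := by positivity
      have h2 : 0 ≤ (1 - a ^ 2) * w := by
        apply mul_nonneg (by nlinarith) hw0
      nlinarith [hsq]
    have hwa : 2 * a ≤ (1 - a ^ 2) * (w + a) := by nlinarith
    have step1 : k * (2 * a) ≤ (1 / a - a) * k / 2 * (w + a) * (2 * a) := by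
      have e : (1 / a - a) * k / 2 * (w + a) * (2 * a) = (1 - a ^ 2) * (w + a) * k := by
        field_simp
      rw [e]
      calc k * (2 * a) = (2 * a) * k := by ring
        _ ≤ (1 - a ^ 2) * (w + a) * k := mul_le_mul_of_nonneg_right hwa hk
    have step2 : k ≤ (1 / a - a) * k / 2 * (w + a) :=
      le_of_mul_le_mul_right step1 (by linarith)
    have step3 : (1 / a - a) * k / 2 ≤ (1 + a) * tk := by
      have h : (1 / a - a) * k ≤ max (3 / 2) (1 / a - a) * k :=
        mul_le_mul_of_nonneg_right (le_max_right _ _) hk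
      calc (1 / a - a) * k / 2 ≤ max (3 / 2) (1 / a - a) * k / 2 := by linarith
        _ ≤ (1 + a) * tk := hβ
    calc k ≤ (1 / a - a) * k / 2 * (w + a) := step2
      _ ≤ ((1 + a) * tk) * (w + a) := by
          apply mul_le_mul_of_nonneg_right step3 (by linarith)
      _ = ((1 + a) * tk) * (w + r) := by rw [hra]
  · -- m = 1/4, r = 1/2
    have hma : m = 1 / 4 := min_eq_left (by nlinarith)
    have hra : r = 1 / 2 := by
      rw [hrdef, hma, show (1/4 : ℝ) = (1/2)^2 by norm_num, Real.sqrt_sq (by norm_num)]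
    have hw2 : w ^ 2 = 1 / 4 + 2 * a + a ^ 2 := by
      rw [hwdef, hma]
      exact Real.sq_sqrt (by positivity)
    have hwge : 5 / 6 ≤ w := by nlinarith [hw2, hw0, hhalf]
    have step3 : 3 / 4 * k ≤ (1 + a) * tk := by
      have h : (3 / 2) * k ≤ max (3 / 2) (1 / a - a) * k :=
        mul_le_mul_of_nonneg_right (le_max_left _ _) hk
      calc 3 / 4 * k = (3 / 2) * k / 2 := by ring
        _ ≤ max (3 / 2) (1 / a - a) * k / 2 := by linarith
        _ ≤ (1 + a) * tk := hβ
    have hβ0 : 0 ≤ (1 + a) * tk := le_trans (by positivity) step3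
    calc k = 3 / 4 * k * (4 / 3) := by ring
      _ ≤ ((1 + a) * tk) * (w + r) := by
          rw [hra]; nlinarith [step3, hwge, hβ0, hk]

private lemma scalarLem (a k ta tk P Q N M S : ℝ) (ha : 0 < a) (hk : 0 ≤ k)
    (hta : ta = Real.sqrt (min (1 / 4) (a ^ 2) + 2 * a + a ^ 2) / (1 + a))
    (htk : tk = max (max (3 / 2) (1 / a - a) * k / (2 * (1 + a))) (2 * k * (1 - ta)))
    (hP : 0 ≤ P) (hQ : 0 ≤ Q) (hN : 0 ≤ N) (hM : 0 ≤ M) (hS : 0 ≤ S)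
    (h1 : S ^ 2 ≤ 2 * M * P - M ^ 2) (h2 : (1 + a) * M ≤ a * P + a * Q + k * N)
    (h3 : S ≤ P) (hMP : M ≤ P) :
    S ≤ ta * (P + Q) + tk * N := by
  have h1a : (0:ℝ) < 1 + a := by linarith
  set m := min (1 / 4) (a ^ 2) with hm
  set w := Real.sqrt (m + 2 * a + a ^ 2) with hwdef
  set r := Real.sqrt m with hrdef
  have hw0 : 0 ≤ w := Real.sqrt_nonneg _
  have hr0 : 0 ≤ r := Real.sqrt_nonneg _
  have hm0 : 0 < m := lt_min (by norm_num) (by positivity)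
  have hm1 : m ≤ 1 / 4 := min_le_left _ _
  have hma : m ≤ a ^ 2 := min_le_right _ _
  have hw2 : w ^ 2 = m + 2 * a + a ^ 2 := Real.sq_sqrt (by positivity)
  have hr2 : r ^ 2 = m := Real.sq_sqrt hm0.le
  have htaw : ta * (1 + a) = w := by rw [hta]; field_simp
  have haw : a ≤ w := by
    have hle : a ^ 2 ≤ m + 2 * a + a ^ 2 := by linarith [hm0.le, ha.le]
    have h' := Real.sqrt_le_sqrt hle
    rwa [Real.sqrt_sq ha.le] at h'
  have hw1a : w ≤ 1 + a := by
    have hle : m + 2 * a + a ^ 2 ≤ (1 + a) ^ 2 := by linarith [hm1]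
    have h' := Real.sqrt_le_sqrt hle
    rwa [Real.sqrt_sq h1a.le] at h'
  have hKF : k ≤ ((1 + a) * tk) * (w + r) := keyKF a k ta tk ha hk hta htk
  set β := (1 + a) * tk with hβdef
  have hta1 : ta ≤ 1 := by rw [hta]; exact (div_le_one h1a).2 hw1a
  have hβ0 : 0 ≤ β := by
    have h : 0 ≤ 2 * k * (1 - ta) := mul_nonneg (by linarith) (by linarith)
    have h' : 0 ≤ tk := le_trans h (by rw [htk]; exact le_max_right _ _)
    positivity
  suffices hmain : (1 + a) * S ≤ w * (P + Q) + β * N by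
    have e : w * (P + Q) + β * N = (1 + a) * (ta * (P + Q) + tk * N) := by
      rw [← htaw, hβdef]; ring
    rw [e] at hmain
    exact le_of_mul_le_mul_left hmain h1a
  set C := a * P + a * Q + k * N with hCdef
  have hC0 : 0 ≤ C := by positivity
  rcases le_or_gt C ((1 + a) * P) with hc | hc
  · -- main case
    have hRHS0 : 0 ≤ w * (P + Q) + β * N := by positivity
    have hLHS0 : 0 ≤ (1 + a) * S := by positivity
    have hq1 : ((1 + a) * S) ^ 2 ≤ C * (2 * (1 + a) * P - C) := by
      have hu : (1 + a) * M ≤ C := h2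
      have hu2 : (1 + a) * M ≤ (1 + a) * P := mul_le_mul_of_nonneg_left hMP h1a.le
      have d1 : 0 ≤ (C - (1 + a) * M) * ((1 + a) * P - C) :=
        mul_nonneg (by linarith) (by linarith)
      have d2 : 0 ≤ (C - (1 + a) * M) * ((1 + a) * P - (1 + a) * M) :=
        mul_nonneg (by linarith) (by linarith)
      have mono : ((1 + a) * M) * (2 * (1 + a) * P - (1 + a) * M) ≤
          C * (2 * (1 + a) * P - C) := by linarith [d1, d2]
      have sqstep : ((1 + a) * S) ^ 2 ≤ (1 + a) ^ 2 * (2 * M * P - M ^ 2) := by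
        have := mul_le_mul_of_nonneg_left h1 (sq_nonneg (1 + a))
        calc ((1 + a) * S) ^ 2 = (1 + a) ^ 2 * S ^ 2 := by ring
          _ ≤ (1 + a) ^ 2 * (2 * M * P - M ^ 2) := this
      have e : (1 + a) ^ 2 * (2 * M * P - M ^ 2)
          = ((1 + a) * M) * (2 * (1 + a) * P - (1 + a) * M) := by ring
      rw [e] at sqstep
      exact le_trans sqstep mono
    have hq2 : C * (2 * (1 + a) * P - C) ≤ (w * (P + Q) + β * N) ^ 2 := by
      have hkβ : k ≤ β * (w + r) := hKF
      have expand : (w * (P + Q) + β * N) ^ 2 - C * (2 * (1 + a) * P - C)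
          = m * P ^ 2 + (m + 2 * a + 2 * a ^ 2) * Q ^ 2 + (β ^ 2 + k ^ 2) * N ^ 2
            + 2 * (m + a + a ^ 2) * (P * Q) + (2 * w * β - 2 * k) * (N * P)
            + (2 * w * β + 2 * a * k) * (N * Q) := by
        rw [hCdef]; linear_combination ((P + Q) ^ 2) * hw2
      have hNP : 0 ≤ N * P := mul_nonneg hN hP
      have hA : 0 ≤ m * P ^ 2 + β ^ 2 * N ^ 2 + (2 * w * β - 2 * k) * (N * P) := by
        have hx : (r * P - β * N) ^ 2 = m * P ^ 2 + β ^ 2 * N ^ 2 - 2 * (r * β) * (N * P) := by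
          linear_combination (P ^ 2) * hr2
        have g1 : 0 ≤ m * P ^ 2 + β ^ 2 * N ^ 2 - 2 * (r * β) * (N * P) := by
          rw [← hx]; exact sq_nonneg _
        have g2 : (-(2 * (r * β))) * (N * P) ≤ (2 * w * β - 2 * k) * (N * P) := by
          apply mul_le_mul_of_nonneg_right _ hNP
          linarith [hkβ]
        linarith [g1, g2]
      have hB1 : 0 ≤ (m + 2 * a + 2 * a ^ 2) * Q ^ 2 := by positivity
      have hB2 : 0 ≤ k ^ 2 * N ^ 2 := by positivity
      have hB3 : 0 ≤ 2 * (m + a + a ^ 2) * (P * Q) := by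
        apply mul_nonneg (by positivity) (mul_nonneg hP hQ)
      have hB4 : 0 ≤ (2 * w * β + 2 * a * k) * (N * Q) := by
        apply mul_nonneg (by positivity) (mul_nonneg hN hQ)
      linarith [expand, hA, hB1, hB2, hB3, hB4]
    have hfin := Real.sqrt_le_sqrt (le_trans hq1 hq2)
    rwa [Real.sqrt_sq hLHS0, Real.sqrt_sq hRHS0] at hfin
  · -- degenerate case : P < C
    have hPc : P ≤ a * Q + k * N := by
      have h' : (1 + a) * P < a * P + (a * Q + k * N) := by
        rw [hCdef] at hc; linarith
      linarith [h']
    have e1 : (1 + a) * S ≤ (1 + a) * P := mul_le_mul_of_nonneg_left h3 h1a.le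
    have e3 : (1 + a - w) * P ≤ (1 + a - w) * (a * Q + k * N) :=
      mul_le_mul_of_nonneg_left hPc (by linarith)
    have e4 : (1 + a - w) * a ≤ w := by
      have h' : a * a ≤ a * w := mul_le_mul_of_nonneg_left haw ha.le
      linarith [h', haw]
    have e5 : (1 + a - w) * k ≤ β := by
      have h : 2 * k * (1 - ta) ≤ tk := by rw [htk]; exact le_max_right _ _
      have h2' : (1 + a) * (2 * k * (1 - ta)) ≤ β := by
        rw [hβdef]; exact mul_le_mul_of_nonneg_left h h1a.le
      have h3' : (1 + a) * (2 * k * (1 - ta)) = 2 * k * (1 + a - w) := by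
        rw [← htaw]; ring
      have h4' : (1 + a - w) * k ≤ 2 * k * (1 + a - w) := by
        have := mul_nonneg hk (sub_nonneg.2 hw1a)
        linarith [this]
      linarith
    have e6 : (1 + a - w) * (a * Q + k * N) ≤ w * Q + β * N := by
      have g1 : ((1 + a - w) * a) * Q ≤ w * Q := mul_le_mul_of_nonneg_right e4 hQ
      have g2 : ((1 + a - w) * k) * N ≤ β * N := mul_le_mul_of_nonneg_right e5 hN
      linarith [g1, g2]
    linarith [e1, e3, e6]

private lemma coarea (q : V → ℝ) (hq : ∀ x, 0 ≤ q x) (a k : ℝ)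
    (ha : 0 ≤ a) (hk : 0 ≤ k) (hsparse : IsSparse G q a k) (U : Finset V) :
    ∀ n : ℕ, ∀ g : V → ℝ, (∀ x, 0 ≤ g x) →
      ∀ A : Finset V, (∀ x, g x ≠ 0 → x ∈ A) → A.card ≤ n →
      (∀ x y, G.Adj x y → g x ≠ 0 ∨ g y ≠ 0 → x ∈ U ∧ y ∈ U) →
      ∑ p ∈ (U ×ˢ U).filter (fun p => G.Adj p.1 p.2), min (g p.1) (g p.2) ≤
        k * ∑ x ∈ A, g x +
          a * ((1/2) * ∑ p ∈ (U ×ˢ U).filter (fun p => G.Adj p.1 p.2), |g p.1 - g p.2|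
            + ∑ x ∈ A, q x * g x) := by
  classical
  intro n
  induction n with
  | zero =>
    intro g hg0 A hA hcard hcov
    have hAe : A = ∅ := Finset.card_eq_zero.1 (Nat.le_zero.1 hcard)
    have hg : ∀ x, g x = 0 := by
      intro x; by_contra h
      have := hA x h; rw [hAe] at this; exact absurd this (Finset.notMem_empty x)
    simp [hg]
  | succ n ih =>
    intro g hg0 A hA hcard hcov
    set E := (U ×ˢ U).filter (fun p => G.Adj p.1 p.2) with hEdef
    set W := A.filter (fun x => g x ≠ 0) with hWdef
    by_cases hWne : W.Nonempty
    case neg =>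
      have hg : ∀ x, g x = 0 := by
        intro x; by_contra h
        exact hWne ⟨x, Finset.mem_filter.2 ⟨hA x h, h⟩⟩
      simp [hg]
    case pos =>
    have hWA : W ⊆ A := Finset.filter_subset _ _
    have hWg : ∀ x ∈ W, g x ≠ 0 := fun x hx => (Finset.mem_filter.1 hx).2
    have hgW0 : ∀ x, x ∉ W → g x = 0 := by
      intro x hx; by_contra h
      exact hx (Finset.mem_filter.2 ⟨hA x h, h⟩)
    have himg : (W.image g).Nonempty := hWne.image g
    set t := (W.image g).min' himg with htdef
    obtain ⟨x₀, hx₀W, hx₀⟩ := Finset.mem_image.1 ((W.image g).min'_mem himg)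
    have ht_le : ∀ x ∈ W, t ≤ g x := fun x hx =>
      Finset.min'_le _ _ (Finset.mem_image_of_mem g hx)
    have ht_pos : 0 < t := by
      rw [htdef, ← hx₀]
      exact lt_of_le_of_ne (hg0 x₀) (Ne.symm (hWg x₀ hx₀W))
    set g' := fun x => g x - t * (if x ∈ W then (1:ℝ) else 0) with hg'def
    have hg'in : ∀ x ∈ W, g' x = g x - t := by
      intro x hx; simp only [hg'def, if_pos hx, mul_one]
    have hg'out : ∀ x, x ∉ W → g' x = g x := by
      intro x hx; simp only [hg'def, if_neg hx, mul_zero, sub_zero]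
    have hg'0 : ∀ x, 0 ≤ g' x := by
      intro x
      by_cases hx : x ∈ W
      · rw [hg'in x hx]; linarith [ht_le x hx]
      · rw [hg'out x hx]; exact hg0 x
    have hg'ne : ∀ x, g' x ≠ 0 → g x ≠ 0 := by
      intro x h h0
      apply h
      have hx : x ∉ W := fun hx => (hWg x hx) h0
      rw [hg'out x hx]; exact h0
    have hg'supp : ∀ x, g' x ≠ 0 → x ∈ W.erase x₀ := by
      intro x h
      have hxW : x ∈ W := by
        by_contra hx
        exact h (by rw [hg'out x hx]; exact hgW0 x hx)
      refine Finset.mem_erase.2 ⟨?_, hxW⟩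
      intro hxx
      apply h
      rw [hg'in x hxW, hxx, hx₀]; ring
    have hcard' : (W.erase x₀).card ≤ n := by
      have h1 : W.card ≤ n + 1 := le_trans (Finset.card_filter_le A _) hcard
      have h2 : (W.erase x₀).card = W.card - 1 := Finset.card_erase_of_mem hx₀W
      omega
    have hcov' : ∀ x y, G.Adj x y → g' x ≠ 0 ∨ g' y ≠ 0 → x ∈ U ∧ y ∈ U := by
      intro x y hadj h
      exact hcov x y hadj (h.imp (hg'ne x) (hg'ne y))
    have IH := ih g' hg'0 (W.erase x₀) hg'supp hcard' hcov'
    -- replace sums over erase by sums over A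
    have hsub : W.erase x₀ ⊆ A := le_trans (Finset.erase_subset _ _) hWA
    have sumg' : ∑ x ∈ W.erase x₀, g' x = ∑ x ∈ A, g' x := by
      apply Finset.sum_subset hsub
      intro x _ hx
      by_contra h
      exact hx (hg'supp x h)
    have sumqg' : ∑ x ∈ W.erase x₀, q x * g' x = ∑ x ∈ A, q x * g' x := by
      apply Finset.sum_subset hsub
      intro x _ hx
      have : g' x = 0 := by
        by_contra h; exact hx (hg'supp x h)
      rw [this, mul_zero]
    rw [sumg', sumqg'] at IH
    -- pointwise decompositions
    have hmin : ∀ x y : V, min (g x) (g y)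
        = min (g' x) (g' y) + t * (if x ∈ W ∧ y ∈ W then (1:ℝ) else 0) := by
      intro x y
      by_cases hx : x ∈ W <;> by_cases hy : y ∈ W
      · rw [if_pos ⟨hx, hy⟩, mul_one, hg'in x hx, hg'in y hy, min_sub_sub_right]; ring
      · rw [if_neg (fun h => hy h.2), mul_zero, add_zero, hg'in x hx, hg'out y hy,
          hgW0 y hy]
        rw [min_eq_right (hg0 x), min_eq_right (by linarith [ht_le x hx] : (0:ℝ) ≤ g x - t)]
      · rw [if_neg (fun h => hx h.1), mul_zero, add_zero, hg'in y hy, hg'out x hx,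
          hgW0 x hx]
        rw [min_eq_left (hg0 y), min_eq_left (by linarith [ht_le y hy] : (0:ℝ) ≤ g y - t)]
      · rw [if_neg (fun h => hx h.1), mul_zero, add_zero, hg'out x hx, hg'out y hy]
    have habs : ∀ x y : V, |g x - g y|
        = |g' x - g' y| + t * ((if x ∈ W ∧ y ∉ W then (1:ℝ) else 0)
            + (if x ∉ W ∧ y ∈ W then (1:ℝ) else 0)) := by
      intro x y
      by_cases hx : x ∈ W <;> by_cases hy : y ∈ W
      · rw [if_neg (fun h => h.2 hy), if_neg (fun h => h.1 hx), hg'in x hx, hg'in y hy]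
        ring_nf
      · rw [if_pos ⟨hx, hy⟩, if_neg (fun h => h.1 hx), hg'in x hx, hg'out y hy, hgW0 y hy]
        rw [sub_zero, sub_zero, abs_of_nonneg (hg0 x),
          abs_of_nonneg (by linarith [ht_le x hx] : (0:ℝ) ≤ g x - t)]
        ring
      · rw [if_neg (fun h => hx h.1), if_pos ⟨hx, hy⟩, hg'in y hy, hg'out x hx, hgW0 x hx]
        rw [zero_sub, zero_sub, abs_neg, abs_neg, abs_of_nonneg (hg0 y),
          abs_of_nonneg (by linarith [ht_le y hy] : (0:ℝ) ≤ g y - t)]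
        ring
      · rw [if_neg (fun h => hx h.1), if_neg (fun h => hy h.2), hg'out x hx, hg'out y hy]
        ring
    have hgdec : ∀ x : V, g x = g' x + t * (if x ∈ W then (1:ℝ) else 0) := by
      intro x; simp only [hg'def]; ring
    -- summed decompositions
    have sum1 : ∑ p ∈ E, min (g p.1) (g p.2)
        = ∑ p ∈ E, min (g' p.1) (g' p.2)
          + t * ((E.filter (fun p => p.1 ∈ W ∧ p.2 ∈ W)).card : ℝ) := by
      rw [Finset.sum_congr rfl (fun p _ => hmin p.1 p.2), Finset.sum_add_distrib,
        ← Finset.mul_sum, Finset.sum_boole]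
    have sum2 : ∑ p ∈ E, |g p.1 - g p.2|
        = ∑ p ∈ E, |g' p.1 - g' p.2|
          + t * (((E.filter (fun p => p.1 ∈ W ∧ p.2 ∉ W)).card : ℝ)
            + ((E.filter (fun p => p.1 ∉ W ∧ p.2 ∈ W)).card : ℝ)) := by
      rw [Finset.sum_congr rfl (fun p _ => habs p.1 p.2), Finset.sum_add_distrib,
        ← Finset.mul_sum, Finset.sum_add_distrib, Finset.sum_boole, Finset.sum_boole]
    have sumA : ∑ x ∈ A, g x = ∑ x ∈ A, g' x + t * (W.card : ℝ) := by
      rw [Finset.sum_congr rfl (fun x _ => hgdec x), Finset.sum_add_distrib,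
        ← Finset.mul_sum, Finset.sum_boole]
      congr 2
      rw [Finset.filter_mem_eq_inter, Finset.inter_eq_right.2 hWA]
    have sumq : ∑ x ∈ A, q x * g x = ∑ x ∈ A, q x * g' x + t * ∑ x ∈ W, q x := by
      have e : ∀ x ∈ A, q x * g x = q x * g' x + t * (if x ∈ W then q x else 0) := by
        intro x _
        by_cases hx : x ∈ W <;> rw [hgdec x] <;> simp [hx] <;> ring
      rw [Finset.sum_congr rfl e, Finset.sum_add_distrib, ← Finset.mul_sum]
      congr 2
      rw [Finset.sum_ite_mem, Finset.inter_eq_right.2 hWA]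
    -- counting identities
    have c1 : (E.filter (fun p => p.1 ∈ W ∧ p.2 ∈ W)).card = edgesTwice G W := by
      have e1 : E.filter (fun p => p.1 ∈ W ∧ p.2 ∈ W)
          = (W ×ˢ W).filter (fun p => G.Adj p.1 p.2) := by
        ext p
        simp only [hEdef, Finset.mem_filter, Finset.mem_product]
        constructor
        · rintro ⟨⟨_, hadj⟩, h1, h2⟩; exact ⟨⟨h1, h2⟩, hadj⟩
        · rintro ⟨⟨h1, h2⟩, hadj⟩
          have hU := hcov p.1 p.2 hadj (Or.inl (hWg _ h1))
          exact ⟨⟨⟨hU.1, hU.2⟩, hadj⟩, h1, h2⟩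
      rw [e1]; rfl
    have c2 : (E.filter (fun p => p.1 ∈ W ∧ p.2 ∉ W)).card = bdryCard G W := by
      have e1 : E.filter (fun p => p.1 ∈ W ∧ p.2 ∉ W)
          = (W ×ˢ U).filter (fun p => G.Adj p.1 p.2 ∧ p.2 ∉ W) := by
        ext p
        simp only [hEdef, Finset.mem_filter, Finset.mem_product]
        constructor
        · rintro ⟨⟨⟨h1U, h2U⟩, hadj⟩, h1, h2⟩; exact ⟨⟨h1, h2U⟩, hadj, h2⟩
        · rintro ⟨⟨h1, h2U⟩, hadj, h2⟩
          have hU := hcov p.1 p.2 hadj (Or.inl (hWg _ h1))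
          exact ⟨⟨⟨hU.1, hU.2⟩, hadj⟩, h1, h2⟩
      have e2 : ∀ x ∈ W, U.filter (fun y => G.Adj x y ∧ y ∉ W)
          = (G.neighborFinset x).filter (fun y => y ∉ W) := by
        intro x hx
        ext y
        simp only [Finset.mem_filter, SimpleGraph.mem_neighborFinset]
        constructor
        · rintro ⟨_, hadj, hyW⟩; exact ⟨hadj, hyW⟩
        · rintro ⟨hadj, hyW⟩
          exact ⟨(hcov x y hadj (Or.inl (hWg x hx))).2, hadj, hyW⟩
      calc (E.filter (fun p => p.1 ∈ W ∧ p.2 ∉ W)).card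
          = ((W ×ˢ U).filter (fun p => G.Adj p.1 p.2 ∧ p.2 ∉ W)).card := by rw [e1]
        _ = ∑ x ∈ W, (U.filter (fun y => G.Adj x y ∧ y ∉ W)).card := by
              rw [Finset.card_filter, Finset.sum_product]
              exact Finset.sum_congr rfl fun x _ => (Finset.card_filter _ _).symm
        _ = ∑ x ∈ W, ((G.neighborFinset x).filter (fun y => y ∉ W)).card :=
              Finset.sum_congr rfl (fun x hx => by rw [e2 x hx])
        _ = bdryCard G W := rfl
    have c3 : (E.filter (fun p => p.1 ∉ W ∧ p.2 ∈ W)).card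
        = (E.filter (fun p => p.1 ∈ W ∧ p.2 ∉ W)).card := by
      apply Finset.card_bij (fun p _ => p.swap)
      · intro p hp
        simp only [hEdef, Finset.mem_filter, Finset.mem_product] at hp ⊢
        obtain ⟨⟨⟨h1U, h2U⟩, hadj⟩, h1, h2⟩ := hp
        exact ⟨⟨⟨h2U, h1U⟩, hadj.symm⟩, h2, h1⟩
      · intro p hp p' hp' h
        have := congrArg Prod.swap h
        simpa using this
      · intro p hp
        refine ⟨p.swap, ?_, ?_⟩
        · simp only [hEdef, Finset.mem_filter, Finset.mem_product] at hp ⊢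
          obtain ⟨⟨⟨h1U, h2U⟩, hadj⟩, h1, h2⟩ := hp
          exact ⟨⟨⟨h2U, h1U⟩, hadj.symm⟩, h2, h1⟩
        · simp
    -- sparseness at W
    have hsp := hsparse W
    have hqmax : ∑ x ∈ W, max (q x) 0 = ∑ x ∈ W, q x :=
      Finset.sum_congr rfl (fun x _ => max_eq_left (hq x))
    rw [hqmax] at hsp
    have hsp' := mul_le_mul_of_nonneg_left hsp ht_pos.le
    -- final assembly
    rw [sum1, sum2, sumA, sumq, c1, c2, c3, c2]
    linarith [IH, hsp']

private lemma pairSum (U : Finset V) (T : V → V → ℝ)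
    (hT : ∀ x y, G.Adj x y → y ∉ U → T x y = 0) :
    ∑ x ∈ U, ∑ y ∈ G.neighborFinset x, T x y
      = ∑ p ∈ (U ×ˢ U).filter (fun p => G.Adj p.1 p.2), T p.1 p.2 := by
  rw [Finset.sum_filter, Finset.sum_product]
  apply Finset.sum_congr rfl
  intro x _
  rw [← Finset.sum_filter]
  refine (Finset.sum_subset ?_ ?_).symm
  · intro y hy
    exact (SimpleGraph.mem_neighborFinset _ _ _).2 (Finset.mem_filter.1 hy).2
  · intro y hy hy'
    have hadj : G.Adj x y := (SimpleGraph.mem_neighborFinset _ _ _).1 hy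
    have : y ∉ U := fun hU => hy' (Finset.mem_filter.2 ⟨hU, hadj⟩)
    exact hT x y hadj this

private lemma pairSwap (U : Finset V) (T : V → V → ℝ) :
    ∑ p ∈ (U ×ˢ U).filter (fun p => G.Adj p.1 p.2), T p.1 p.2
      = ∑ p ∈ (U ×ˢ U).filter (fun p => G.Adj p.1 p.2), T p.2 p.1 := by
  apply Finset.sum_nbij' (i := fun p => p.swap) (j := fun p => p.swap)
  · intro p hp
    simp only [Finset.mem_filter, Finset.mem_product] at hp ⊢
    exact ⟨⟨hp.1.2, hp.1.1⟩, hp.2.symm⟩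
  · intro p hp
    simp only [Finset.mem_filter, Finset.mem_product] at hp ⊢
    exact ⟨⟨hp.1.2, hp.1.1⟩, hp.2.symm⟩
  · intro p _; simp
  · intro p _; simp
  · intro p _; rfl

end Aux

/-- if `(G,q)` is `(a,k)`-sparse with `a > 0`, `k ≥ 0`, `q ≥ 0`, then with
`ã := √(min(1/4,a²) + 2a + a²)/(1+a)` and
`k̃ := max( max(3/2, 1/a - a)·k/(2(1+a)), 2k(1-ã) )` one has `ã ∈ (0,1)` and
`(1-ã)(Q_deg(f)+Q_q(f)) - k̃‖f‖² ≤ Q_Δ(f)+Q_q(f) ≤ (1+ã)(Q_deg(f)+Q_q(f)) + k̃‖f‖²`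
for all finitely supported `f`. -/
theorem stmt4 [Countable V] (q : V → ℝ) (hq : ∀ x, 0 ≤ q x) (a k : ℝ)
    (ha : 0 < a) (hk : 0 ≤ k) (hsparse : IsSparse G q a k) :
    ∀ ta tk : ℝ,
      ta = Real.sqrt (min (1 / 4) (a ^ 2) + 2 * a + a ^ 2) / (1 + a) →
      tk = max (max (3 / 2) (1 / a - a) * k / (2 * (1 + a))) (2 * k * (1 - ta)) →
      (0 < ta ∧ ta < 1) ∧
      ∀ f : V → ℂ, (Function.support f).Finite →
        (1 - ta) * (qDeg G f + qPot q f) - tk * qNormSq f ≤ qLap G f + qPot q f ∧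
        qLap G f + qPot q f ≤ (1 + ta) * (qDeg G f + qPot q f) + tk * qNormSq f := by
  intro ta tk hta htk
  classical
  have h1a : (0:ℝ) < 1 + a := by linarith
  have hm0 : (0:ℝ) < min (1/4) (a^2) := lt_min (by norm_num) (by positivity)
  have hargpos : (0:ℝ) < min (1/4) (a^2) + 2*a + a^2 := by positivity
  have hargpos' : (0:ℝ) < min (1/4) (a^2) + 2*a + a^2 := hargpos
  have htapos : 0 < ta := by
    rw [hta]
    have harg : (0:ℝ) < min (1 / 4) (a ^ 2) + 2 * a + a ^ 2 := by positivity
    exact div_pos (Real.sqrt_pos.2 harg) h1a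
  have hta1 : ta < 1 := by
    rw [hta, div_lt_one h1a]
    have h1 : min (1 / 4) (a ^ 2) + 2 * a + a ^ 2 < (1 + a) ^ 2 := by
      have := min_le_left (1/4:ℝ) (a^2)
      nlinarith [this]
    calc Real.sqrt (min (1 / 4) (a ^ 2) + 2 * a + a ^ 2)
        < Real.sqrt ((1 + a) ^ 2) := Real.sqrt_lt_sqrt (by positivity) h1
      _ = 1 + a := Real.sqrt_sq h1a.le
  refine ⟨⟨htapos, hta1⟩, ?_⟩
  intro f hf
  set S : Finset V := hf.toFinset with hSdef
  have hfS : ∀ x, f x ≠ 0 → x ∈ S := fun x hx => hf.mem_toFinset.2 hx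
  have hS0 : ∀ x, x ∉ S → f x = 0 := fun x hx => of_not_not (fun h => hx (hfS x h))
  set U : Finset V := S ∪ S.biUnion (fun z => G.neighborFinset z) with hUdef
  have hSU : S ⊆ U := Finset.subset_union_left
  have hNU : ∀ x y, G.Adj x y → f x ≠ 0 → y ∈ U := by
    intro x y hadj hx
    apply Finset.mem_union_right
    exact Finset.mem_biUnion.2 ⟨x, hfS x hx, (SimpleGraph.mem_neighborFinset _ _ _).2 hadj⟩
  -- tsum reductions
  have hqn : qNormSq f = ∑ x ∈ S, ‖f x‖^2 := by
    apply tsum_eq_sum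
    intro x hx; rw [hS0 x hx]; simp
  have hqp : qPot q f = ∑ x ∈ S, q x * ‖f x‖^2 := by
    apply tsum_eq_sum
    intro x hx; rw [hS0 x hx]; simp
  have hqd : qDeg G f = ∑ x ∈ S, (G.degree x : ℝ) * ‖f x‖^2 := by
    apply tsum_eq_sum
    intro x hx; rw [hS0 x hx]; simp
  have hlapx : ∀ x : V, (∑' y, if G.Adj x y then ‖f x - f y‖^2 else 0)
      = ∑ y ∈ G.neighborFinset x, ‖f x - f y‖^2 := by
    intro x
    have h0 : ∀ y ∉ G.neighborFinset x, (if G.Adj x y then ‖f x - f y‖^2 else 0) = 0 := by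
      intro y hy
      rw [if_neg (fun h => hy ((SimpleGraph.mem_neighborFinset _ _ _).2 h))]
    rw [tsum_eq_sum h0]
    apply Finset.sum_congr rfl
    intro y hy
    rw [if_pos ((SimpleGraph.mem_neighborFinset _ _ _).1 hy)]
  have hTlap : ∀ x y, G.Adj x y → y ∉ U → ‖f x - f y‖^2 = 0 := by
    intro x y hadj hy
    have hfy : f y = 0 := hS0 y (fun h => hy (hSU h))
    have hfx : f x = 0 := by
      by_contra h
      exact hy (hNU x y hadj h)
    rw [hfx, hfy]; simp
  have hlap : qLap G f
      = (1/2) * ∑ p ∈ (U ×ˢ U).filter (fun p => G.Adj p.1 p.2), ‖f p.1 - f p.2‖^2 := by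
    have hvan : ∀ x ∉ U, (∑' y, if G.Adj x y then ‖f x - f y‖^2 else 0) = 0 := by
      intro x hx
      rw [hlapx x]
      apply Finset.sum_eq_zero
      intro y hy
      have hadj : G.Adj x y := (SimpleGraph.mem_neighborFinset _ _ _).1 hy
      have hfx : f x = 0 := hS0 x (fun h => hx (hSU h))
      have hfy : f y = 0 := by
        by_contra h
        exact hx (hNU y x hadj.symm h)
      rw [hfx, hfy]; simp
    have : qLap G f = (1/2) * ∑ x ∈ U, ∑ y ∈ G.neighborFinset x, ‖f x - f y‖^2 := by
      unfold qLap
      congr 1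
      rw [tsum_eq_sum hvan]
      exact Finset.sum_congr rfl (fun x _ => hlapx x)
    rw [this, pairSum G U _ hTlap]
  -- finite quantities
  have hqdeg : qDeg G f
      = ∑ p ∈ (U ×ˢ U).filter (fun p => G.Adj p.1 p.2), ‖f p.1‖^2 := by
    rw [hqd]
    have e1 : ∑ x ∈ S, (G.degree x : ℝ) * ‖f x‖^2
        = ∑ x ∈ U, (G.degree x : ℝ) * ‖f x‖^2 := by
      apply Finset.sum_subset hSU
      intro x _ hx
      rw [hS0 x hx]; simp
    have e2 : ∀ x ∈ U, (G.degree x : ℝ) * ‖f x‖^2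
        = ∑ y ∈ G.neighborFinset x, ‖f x‖^2 := by
      intro x _
      rw [Finset.sum_const, SimpleGraph.card_neighborFinset_eq_degree, nsmul_eq_mul]
    have hT : ∀ x y, G.Adj x y → y ∉ U → ‖f x‖^2 = 0 := by
      intro x y hadj hy
      have hfx : f x = 0 := by
        by_contra h
        exact hy (hNU x y hadj h)
      rw [hfx]; simp
    rw [e1, Finset.sum_congr rfl e2, pairSum G U _ hT]
  set E := (U ×ˢ U).filter (fun p => G.Adj p.1 p.2) with hEdef
  set P2 := ∑ p ∈ E, ‖f p.1‖^2 with hP2def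
  set S2 := ∑ p ∈ E, ‖f p.1‖ * ‖f p.2‖ with hS2def
  set M2 := ∑ p ∈ E, min (‖f p.1‖^2) (‖f p.2‖^2) with hM2def
  set B2 := ∑ p ∈ E, |‖f p.1‖^2 - ‖f p.2‖^2| with hB2def
  set Nn := ∑ x ∈ S, ‖f x‖^2 with hNndef
  set Qq := ∑ x ∈ S, q x * ‖f x‖^2 with hQqdef
  have hswap : ∑ p ∈ E, ‖f p.2‖^2 = P2 := (pairSwap G U (fun x y => ‖f x‖^2)).symm
  have hP2 : 0 ≤ P2 := Finset.sum_nonneg (fun p _ => by positivity)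
  have hS2 : 0 ≤ S2 := Finset.sum_nonneg (fun p _ => by positivity)
  have hM2 : 0 ≤ M2 := Finset.sum_nonneg (fun p _ => le_min (by positivity) (by positivity))
  have hB2 : 0 ≤ B2 := Finset.sum_nonneg (fun p _ => abs_nonneg _)
  have hNn : 0 ≤ Nn := Finset.sum_nonneg (fun x _ => by positivity)
  have hQq : 0 ≤ Qq := Finset.sum_nonneg (fun x _ => mul_nonneg (hq x) (by positivity))
  -- M2 = P2 - B2/2
  have hMB : M2 = P2 - (1/2) * B2 := by
    have key : ∀ p ∈ E, min (‖f p.1‖^2) (‖f p.2‖^2)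
        = (‖f p.1‖^2 + ‖f p.2‖^2)/2 - |‖f p.1‖^2 - ‖f p.2‖^2|/2 := by
      intro p _
      rcases le_total (‖f p.1‖^2) (‖f p.2‖^2) with h | h
      · rw [min_eq_left h, abs_of_nonpos (by linarith)]; ring
      · rw [min_eq_right h, abs_of_nonneg (by linarith)]; ring
    rw [hM2def, Finset.sum_congr rfl key, Finset.sum_sub_distrib]
    have e1 : ∑ p ∈ E, (‖f p.1‖^2 + ‖f p.2‖^2)/2 = P2 := by
      rw [← Finset.sum_div, Finset.sum_add_distrib, hswap]
      rw [hP2def]; ring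
    have e2 : ∑ p ∈ E, |‖f p.1‖^2 - ‖f p.2‖^2|/2 = B2/2 := by
      rw [← Finset.sum_div]
    rw [e1, e2]; ring
  -- R2 = 2 P2 - 2 S2
  have hR : ∑ p ∈ E, (‖f p.1‖ - ‖f p.2‖)^2 = 2*P2 - 2*S2 := by
    have key : ∀ p ∈ E, (‖f p.1‖ - ‖f p.2‖)^2
        = ‖f p.1‖^2 + ‖f p.2‖^2 - 2*(‖f p.1‖ * ‖f p.2‖) := fun p _ => by ring
    rw [Finset.sum_congr rfl key, Finset.sum_sub_distrib, Finset.sum_add_distrib, hswap,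
      ← Finset.mul_sum]
    ring
  have hR0 : 0 ≤ ∑ p ∈ E, (‖f p.1‖ - ‖f p.2‖)^2 :=
    Finset.sum_nonneg (fun p _ => sq_nonneg _)
  have h3 : S2 ≤ P2 := by
    rw [hR] at hR0; linarith
  have hMP : M2 ≤ P2 := by rw [hMB]; linarith
  -- Cauchy-Schwarz : (S2 - M2)^2 ≤ M2 * (2 P2 - 2 S2)
  have h1 : S2 ^ 2 ≤ 2 * M2 * P2 - M2 ^ 2 := by
    have key : ∀ p ∈ E, ‖f p.1‖ * ‖f p.2‖ - min (‖f p.1‖^2) (‖f p.2‖^2)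
        = min (‖f p.1‖) (‖f p.2‖) * |‖f p.1‖ - ‖f p.2‖| := by
      intro p _
      rcases le_total (‖f p.1‖) (‖f p.2‖) with h | h
      · rw [min_eq_left (pow_le_pow_left₀ (norm_nonneg _) h 2), min_eq_left h,
          abs_of_nonpos (by linarith)]
        ring
      · rw [min_eq_right (pow_le_pow_left₀ (norm_nonneg _) h 2), min_eq_right h,
          abs_of_nonneg (by linarith)]
        ring
    have hSM : S2 - M2 = ∑ p ∈ E, min (‖f p.1‖) (‖f p.2‖) * |‖f p.1‖ - ‖f p.2‖| := by
      rw [hS2def, hM2def, ← Finset.sum_sub_distrib]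
      exact Finset.sum_congr rfl key
    have hCS := Finset.sum_mul_sq_le_sq_mul_sq E (fun p => min (‖f p.1‖) (‖f p.2‖))
      (fun p => |‖f p.1‖ - ‖f p.2‖|)
    have eA : ∑ p ∈ E, (min (‖f p.1‖) (‖f p.2‖))^2 = M2 := by
      apply Finset.sum_congr rfl
      intro p _
      rcases le_total (‖f p.1‖) (‖f p.2‖) with h | h
      · rw [min_eq_left h, min_eq_left (pow_le_pow_left₀ (norm_nonneg _) h 2)]
      · rw [min_eq_right h, min_eq_right (pow_le_pow_left₀ (norm_nonneg _) h 2)]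
    have eB : ∑ p ∈ E, (|‖f p.1‖ - ‖f p.2‖|)^2 = 2*P2 - 2*S2 := by
      rw [← hR]
      exact Finset.sum_congr rfl (fun p _ => sq_abs _)
    rw [← hSM, eA, eB] at hCS
    nlinarith [hCS]
  -- coarea consequence
  have hcovg : ∀ x y, G.Adj x y → (fun x => ‖f x‖^2) x ≠ 0 ∨ (fun x => ‖f x‖^2) y ≠ 0 →
      x ∈ U ∧ y ∈ U := by
    intro x y hadj h
    have hne : ∀ z, ‖f z‖^2 ≠ 0 → f z ≠ 0 := by
      intro z hz h0; apply hz; rw [h0]; simp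
    rcases h with h | h
    · exact ⟨hSU (hfS x (hne x h)), hNU x y hadj (hne x h)⟩
    · exact ⟨hNU y x hadj.symm (hne y h), hSU (hfS y (hne y h))⟩
  have hco := coarea G q hq a k ha.le hk hsparse U S.card (fun x => ‖f x‖^2)
    (fun x => by positivity) S
    (fun x hx => hfS x (fun h0 => hx (by show ‖f x‖^2 = 0; rw [h0]; simp))) le_rfl hcovg
  have h2 : (1 + a) * M2 ≤ a * P2 + a * Qq + k * Nn := by
    have hB2eq : (1/2) * B2 = P2 - M2 := by rw [hMB]; ring
    rw [← hEdef, ← hM2def, ← hB2def, ← hNndef, ← hQqdef] at hco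
    nlinarith [hco, hB2eq, ha.le]
  have hmain := scalarLem a k ta tk P2 Qq Nn M2 S2 ha hk hta htk hP2 hQq hNn hM2 hS2 h1 h2 h3 hMP
  -- Laplacian bounds
  have hL1 : 2*P2 - 2*S2 ≤ ∑ p ∈ E, ‖f p.1 - f p.2‖^2 := by
    rw [← hR]
    apply Finset.sum_le_sum
    intro p _
    have h := abs_norm_sub_norm_le (f p.1) (f p.2)
    calc (‖f p.1‖ - ‖f p.2‖)^2 = |‖f p.1‖ - ‖f p.2‖|^2 := (sq_abs _).symm
      _ ≤ ‖f p.1 - f p.2‖^2 := pow_le_pow_left₀ (abs_nonneg _) h 2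
  have hL2 : ∑ p ∈ E, ‖f p.1 - f p.2‖^2 ≤ 2*P2 + 2*S2 := by
    have hplus : ∑ p ∈ E, (‖f p.1‖ + ‖f p.2‖)^2 = 2*P2 + 2*S2 := by
      have key : ∀ p ∈ E, (‖f p.1‖ + ‖f p.2‖)^2
          = ‖f p.1‖^2 + ‖f p.2‖^2 + 2*(‖f p.1‖ * ‖f p.2‖) := fun p _ => by ring
      rw [Finset.sum_congr rfl key, Finset.sum_add_distrib, Finset.sum_add_distrib, hswap,
        ← Finset.mul_sum]
      ring
    rw [← hplus]
    apply Finset.sum_le_sum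
    intro p _
    have h := norm_sub_le (f p.1) (f p.2)
    exact pow_le_pow_left₀ (norm_nonneg _) h 2
  rw [hlap, hqdeg, hqp, hqn]
  constructor
  · nlinarith [hmain, hL1]
  · nlinarith [hmain, hL2]

end
end

section
/- (Upside-Down Lemma, non-magnetic version.) Let G = (V,E) be a locally finite graph and q : V → ℝ. If there are ã ∈ (0,1) and k̃ ≥ 0 such that for all finitely supported f : V → ℂ one has (1−ã)(Q_deg(f) + Q_q(f)) − k̃·‖f‖² ≤ Q_Δ(f) + Q_q(f), then for all finitely supported f : V → ℂ one also has Q_Δ(f) + Q_q(f) ≤ (1+ã)(Q_deg(f) + Q_q(f)) + k̃·‖f‖². -/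
open scoped BigOperators

noncomputable section

variable {V : Type*} [DecidableEq V] (G : SimpleGraph V) [DecidableRel G.Adj]

variable [G.LocallyFinite]

/-!
Apply the hypothesis to `|f| = fun x => ‖f x‖`. On each edge,
`|f x - f y|² + (|f x| - |f y|)² ≤ 2|f x|² + 2|f y|²`, so summing over ordered pairs of adjacent
vertices gives `Q_Δ(f) + Q_Δ(|f|) ≤ 2 Q_deg(f)`. Since `|f|` has the same `Q_deg`, `Q_q` and `‖·‖²`
as `f`, the lower bound for `Q_Δ(|f|)` turns into the upper bound for `Q_Δ(f)`.
-/

theorem norm_sub_sq_add_norm_sub_norm_sq_le {E : Type*} [SeminormedAddCommGroup E] (a b : E) :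
    ‖a - b‖ ^ 2 + (‖a‖ - ‖b‖) ^ 2 ≤ 2 * ‖a‖ ^ 2 + 2 * ‖b‖ ^ 2 := by
  nlinarith [norm_sub_le a b, norm_nonneg (a - b), norm_nonneg a, norm_nonneg b]

namespace SimpleGraph

section closedNbhdFinset

variable {V : Type*} [DecidableEq V] (G : SimpleGraph V) [G.LocallyFinite]

def closedNbhdFinset (S : Finset V) : Finset V := S ∪ S.biUnion fun x => G.neighborFinset x

theorem subset_closedNbhdFinset (S : Finset V) : S ⊆ G.closedNbhdFinset S :=
  Finset.subset_union_left

theorem mem_closedNbhdFinset_of_adj {S : Finset V} {x y : V} (hxy : G.Adj x y) (hy : y ∈ S) :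
    x ∈ G.closedNbhdFinset S :=
  Finset.mem_union_right _ <|
    Finset.mem_biUnion.mpr ⟨y, hy, (G.mem_neighborFinset y x).mpr hxy.symm⟩

variable [DecidableRel G.Adj]

theorem tsum_tsum_adj_eq_sum_sum (S : Finset V) (φ : V → V → ℝ)
    (hφ : ∀ x y, x ∉ S → y ∉ S → φ x y = 0) :
    ∑' x, ∑' y, (if G.Adj x y then φ x y else 0) =
      ∑ x ∈ G.closedNbhdFinset S, ∑ y ∈ G.closedNbhdFinset S, if G.Adj x y then φ x y else 0 := by
  have hzero : ∀ x y, x ∉ G.closedNbhdFinset S ∨ y ∉ G.closedNbhdFinset S →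
      (if G.Adj x y then φ x y else 0) = 0 := by
    intro x y hxy
    split_ifs with hadj
    · refine hφ x y (fun hx => ?_) (fun hy => ?_)
      · exact hxy.elim (· (G.subset_closedNbhdFinset S hx))
          (· (G.mem_closedNbhdFinset_of_adj hadj.symm hx))
      · exact hxy.elim (· (G.mem_closedNbhdFinset_of_adj hadj hy))
          (· (G.subset_closedNbhdFinset S hy))
    · rfl
  rw [tsum_eq_sum fun x hx => by simp [hzero x _ (Or.inl hx)]]
  exact Finset.sum_congr rfl fun x _ => tsum_eq_sum fun y hy => hzero x y (Or.inr hy)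

end closedNbhdFinset

theorem sum_sum_adj_add {V : Type*} (G : SimpleGraph V) [DecidableRel G.Adj] (T : Finset V)
    (u : V → ℝ) :
    ∑ x ∈ T, ∑ y ∈ T, (if G.Adj x y then u x + u y else 0) =
      2 * ∑ x ∈ T, ∑ y ∈ T, if G.Adj x y then u x else 0 := by
  have hswap : ∑ x ∈ T, ∑ y ∈ T, (if G.Adj x y then u y else 0) =
      ∑ x ∈ T, ∑ y ∈ T, if G.Adj x y then u x else 0 := by
    rw [Finset.sum_comm]
    simp only [G.adj_comm]
  calc ∑ x ∈ T, ∑ y ∈ T, (if G.Adj x y then u x + u y else 0)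
      = ∑ x ∈ T, ∑ y ∈ T, ((if G.Adj x y then u x else 0) + if G.Adj x y then u y else 0) := by
        simp only [ite_add_ite, add_zero]
    _ = 2 * ∑ x ∈ T, ∑ y ∈ T, if G.Adj x y then u x else 0 := by
        simp only [Finset.sum_add_distrib, hswap, two_mul]

end SimpleGraph

section QuadraticForms

variable {V : Type*} (G : SimpleGraph V)

theorem qDeg_eq_tsum_tsum_adj [DecidableRel G.Adj] [G.LocallyFinite] (f : V → ℂ) :
    qDeg G f = ∑' x, ∑' y, if G.Adj x y then ‖f x‖ ^ 2 else 0 := by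
  refine tsum_congr fun x => ?_
  rw [tsum_eq_sum (s := G.neighborFinset x) fun y hy => by simp_all]
  simp [Finset.sum_ite, Finset.filter_true_of_mem]

theorem qLap_add_qLap_norm_le [DecidableEq V] [DecidableRel G.Adj] [G.LocallyFinite]
    {f : V → ℂ} (hf : (Function.support f).Finite) :
    qLap G f + qLap G (fun x => (‖f x‖ : ℂ)) ≤ 2 * qDeg G f := by
  set S := hf.toFinset
  set T := G.closedNbhdFinset S
  have hS : ∀ x, x ∉ S → f x = 0 := fun x hx => by simpa [S] using hx
  have hLap : ∀ g : V → ℂ, (∀ x, x ∉ S → g x = 0) →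
      qLap G g = 1 / 2 * ∑ x ∈ T, ∑ y ∈ T, if G.Adj x y then ‖g x - g y‖ ^ 2 else 0 :=
    fun g hg => congrArg _ <|
      G.tsum_tsum_adj_eq_sum_sum S _ fun x y hx hy => by simp [hg x hx, hg y hy]
  have hDeg : qDeg G f = ∑ x ∈ T, ∑ y ∈ T, if G.Adj x y then ‖f x‖ ^ 2 else 0 := by
    rw [qDeg_eq_tsum_tsum_adj, G.tsum_tsum_adj_eq_sum_sum S _ fun x y hx _ => by simp [hS x hx]]
  rw [hLap f hS, hLap _ fun x hx => by simp [hS x hx], hDeg, ← mul_add]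
  calc 1 / 2 * ((∑ x ∈ T, ∑ y ∈ T, if G.Adj x y then ‖f x - f y‖ ^ 2 else 0) +
        ∑ x ∈ T, ∑ y ∈ T, if G.Adj x y then ‖(‖f x‖ : ℂ) - ‖f y‖‖ ^ 2 else 0)
      ≤ 1 / 2 * ∑ x ∈ T, ∑ y ∈ T, if G.Adj x y then 2 * ‖f x‖ ^ 2 + 2 * ‖f y‖ ^ 2 else 0 := by
        simp only [← Finset.sum_add_distrib, ite_add_ite, add_zero]
        gcongr with x _ y _
        split_ifs
        · rw [← Complex.ofReal_sub, Complex.norm_real, Real.norm_eq_abs, sq_abs]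
          exact norm_sub_sq_add_norm_sub_norm_sq_le (f x) (f y)
        · rfl
    _ = 2 * ∑ x ∈ T, ∑ y ∈ T, if G.Adj x y then ‖f x‖ ^ 2 else 0 := by
        rw [G.sum_sum_adj_add T fun x => 2 * ‖f x‖ ^ 2]
        simp only [Finset.mul_sum, mul_ite, mul_zero]
        ring_nf

theorem qDeg_ofReal_norm [G.LocallyFinite] (f : V → ℂ) :
    qDeg G (fun x => (‖f x‖ : ℂ)) = qDeg G f := by
  simp [qDeg]

theorem qPot_ofReal_norm (q : V → ℝ) (f : V → ℂ) :
    qPot q (fun x => (‖f x‖ : ℂ)) = qPot q f := by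
  simp [qPot]

theorem qNormSq_ofReal_norm (f : V → ℂ) : qNormSq (fun x => (‖f x‖ : ℂ)) = qNormSq f := by
  simp [qNormSq]

end QuadraticForms

theorem stmt5 (q : V → ℝ) (ta tk : ℝ)
    (h : ∀ f : V → ℂ, (Function.support f).Finite →
      (1 - ta) * (qDeg G f + qPot q f) - tk * qNormSq f ≤ qLap G f + qPot q f)
    (f : V → ℂ) (hf : (Function.support f).Finite) :
    qLap G f + qPot q f ≤ (1 + ta) * (qDeg G f + qPot q f) + tk * qNormSq f := by
  have hnorm := h (fun x => (‖f x‖ : ℂ)) (hf.subset fun x => by simp)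
  rw [qDeg_ofReal_norm, qPot_ofReal_norm, qNormSq_ofReal_norm] at hnorm
  linarith [qLap_add_qLap_norm_le G hf]
end
end
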